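/- arXiv:1106.1512 — 9 statements merged into one kernel-verified Lean document; each statement's English description precedes it below -/
import Mathlib

section
/- Let V be an A-module equipped with: an R-bilinear, A-bilinear, alternating Lie bracket [·,·]_V; a Lie connection ∇ on V with respect to [·,·]_V; and an A-bilinear alternating map B : Der_R(A) × Der_R(A) → V such that (a) [B(X₁,X₂), v]_V = C_∇(X₁,X₂)(v) for all X₁, X₂ ∈ Der_R(A) and v ∈ V, and (b) the cyclic sum over (X₁,X₂,X₃) of ∇_{X₁}(B(X₂,X₃)) − B([X₁,X₂], X₃) vanishes for all X₁, X₂, X₃ ∈ Der_R(A). Then on Der_R(A) ⊕ V the bracket [[(X₁,v₁),(X₂,v₂)]] = ([X₁,X₂], [v₁,v₂]_V + ∇_{X₁}(v₂) − ∇_{X₂}(v₁) + B(X₁,X₂)) is an R-bilinear Lie bracket, and together with the anchor pr₁ it satisfies the Leibniz rule [[u, f•w]] = f•[[u,w]] + pr₁(u)(f)•w; thus (Der_R(A) ⊕ V, [[·,·]], pr₁) is a Lie algebroid over A whose anchor is surjective with kernel {0} ⊕ V. Moreover pr₂([[(X,0),(Y,0)]]) = B(X,Y) for all X, Y ∈ Der_R(A).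 -/
/-- A Lie algebroid structure on a module `F` over a commutative `R`-algebra `A`. -/
structure IsLieAlgebroid (R A : Type*) [CommRing R] [CommRing A] [Algebra R A]
    (F : Type*) [AddCommGroup F] [Module R F] [Module A F] [IsScalarTower R A F]
    (br : F → F → F) (ρ : F →ₗ[A] Derivation R A A) : Prop where
  add_left : ∀ X Y Z : F, br (X + Y) Z = br X Z + br Y Z
  add_right : ∀ X Y Z : F, br X (Y + Z) = br X Y + br X Z
  smul_left : ∀ (r : R) (X Y : F), br (r • X) Y = r • br X Y
  smul_right : ∀ (r : R) (X Y : F), br X (r • Y) = r • br X Y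
  alt : ∀ X : F, br X X = 0
  jacobi : ∀ X Y Z : F, br X (br Y Z) + br Y (br Z X) + br Z (br X Y) = 0
  leibniz : ∀ (f : A) (X Y : F), br X (f • Y) = f • br X Y + ρ X f • Y

/-- given an `A`-module `V` with an `A`-bilinear alternating Lie bracket,
a Lie connection `∇`, and an `A`-bilinear alternating `B` satisfying the curvature
identity and the Bianchi-type identity, the displayed bracket on `Der_R(A) ⊕ V`
together with the anchor `pr₁` is a Lie algebroid whose anchor is surjective with
kernel `{0} ⊕ V`, and `pr₂ [[(X,0),(Y,0)]] = B X Y`. -/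
theorem transitive_algebroid_from_connection
    (R A : Type*) [CommRing R] [CommRing A] [Algebra R A]
    (V : Type*) [AddCommGroup V] [Module R V] [Module A V] [IsScalarTower R A V]
    (brV : V → V → V)
    (hV_add_l : ∀ u v w : V, brV (u + v) w = brV u w + brV v w)
    (hV_add_r : ∀ u v w : V, brV u (v + w) = brV u v + brV u w)
    (hV_smulR_l : ∀ (r : R) (v w : V), brV (r • v) w = r • brV v w)
    (hV_smulR_r : ∀ (r : R) (v w : V), brV v (r • w) = r • brV v w)
    (hV_smulA_l : ∀ (f : A) (v w : V), brV (f • v) w = f • brV v w)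
    (hV_smulA_r : ∀ (f : A) (v w : V), brV v (f • w) = f • brV v w)
    (hV_alt : ∀ v : V, brV v v = 0)
    (hV_jacobi : ∀ u v w : V, brV u (brV v w) + brV v (brV w u) + brV w (brV u v) = 0)
    (nabla : Derivation R A A → V → V)
    (hN_add_X : ∀ (X Y : Derivation R A A) (v : V),
      nabla (X + Y) v = nabla X v + nabla Y v)
    (hN_smulA_X : ∀ (f : A) (X : Derivation R A A) (v : V),
      nabla (f • X) v = f • nabla X v)
    (hN_add_v : ∀ (X : Derivation R A A) (v w : V),
      nabla X (v + w) = nabla X v + nabla X w)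
    (hN_smulR_v : ∀ (X : Derivation R A A) (r : R) (v : V),
      nabla X (r • v) = r • nabla X v)
    (hN_leibniz : ∀ (X : Derivation R A A) (f : A) (v : V),
      nabla X (f • v) = X f • v + f • nabla X v)
    (hN_lie : ∀ (X : Derivation R A A) (v w : V),
      nabla X (brV v w) = brV (nabla X v) w + brV v (nabla X w))
    (B : Derivation R A A → Derivation R A A → V)
    (hB_add_l : ∀ X Y Z : Derivation R A A, B (X + Y) Z = B X Z + B Y Z)
    (hB_add_r : ∀ X Y Z : Derivation R A A, B X (Y + Z) = B X Y + B X Z)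
    (hB_smul_l : ∀ (f : A) (X Y : Derivation R A A), B (f • X) Y = f • B X Y)
    (hB_smul_r : ∀ (f : A) (X Y : Derivation R A A), B X (f • Y) = f • B X Y)
    (hB_alt : ∀ X : Derivation R A A, B X X = 0)
    (hB_curv : ∀ (X₁ X₂ : Derivation R A A) (v : V),
      brV (B X₁ X₂) v = nabla X₁ (nabla X₂ v) - nabla X₂ (nabla X₁ v) - nabla ⁅X₁, X₂⁆ v)
    (hB_bianchi : ∀ X₁ X₂ X₃ : Derivation R A A,
      (nabla X₁ (B X₂ X₃) - B ⁅X₁, X₂⁆ X₃) + (nabla X₂ (B X₃ X₁) - B ⁅X₂, X₃⁆ X₁)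
        + (nabla X₃ (B X₁ X₂) - B ⁅X₃, X₁⁆ X₂) = 0) :
    IsLieAlgebroid R A (Derivation R A A × V)
      (fun p q => (⁅p.1, q.1⁆, brV p.2 q.2 + nabla p.1 q.2 - nabla q.1 p.2 + B p.1 q.1))
      (LinearMap.fst A (Derivation R A A) V) ∧
    Function.Surjective (LinearMap.fst A (Derivation R A A) V) ∧
    (∀ p : Derivation R A A × V,
      p ∈ LinearMap.ker (LinearMap.fst A (Derivation R A A) V) ↔ ∃ v : V, p = (0, v)) ∧
    (∀ X Y : Derivation R A A,
      ((fun p q => (⁅p.1, q.1⁆,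
          brV p.2 q.2 + nabla p.1 q.2 - nabla q.1 p.2 + B p.1 q.1))
        ((X, (0 : V))) ((Y, (0 : V)))).2 = B X Y) := by
  
  -- derived lemmas
  have hV_skew : ∀ v w : V, brV v w = - brV w v := by
    intro v w
    have h := hV_alt (v + w)
    rw [hV_add_l, hV_add_r, hV_add_r, hV_alt, hV_alt] at h
    have h' : brV v w + brV w v = 0 := by
      linear_combination (norm := abel) h
    exact eq_neg_of_add_eq_zero_left h'
  have hB_skew : ∀ X Y : Derivation R A A, B X Y = - B Y X := by
    intro X Y
    have h := hB_alt (X + Y)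
    rw [hB_add_l, hB_add_r, hB_add_r, hB_alt, hB_alt] at h
    have h' : B X Y + B Y X = 0 := by
      linear_combination (norm := abel) h
    exact eq_neg_of_add_eq_zero_left h'
  have hN_smulR_X : ∀ (r : R) (X : Derivation R A A) (v : V),
      nabla (r • X) v = r • nabla X v := by
    intro r X v
    rw [← algebraMap_smul A r X, hN_smulA_X, algebraMap_smul]
  have hB_smulR_l : ∀ (r : R) (X Y : Derivation R A A), B (r • X) Y = r • B X Y := by
    intro r X Y
    rw [← algebraMap_smul A r X, hB_smul_l, algebraMap_smul]
  have hB_smulR_r : ∀ (r : R) (X Y : Derivation R A A), B X (r • Y) = r • B X Y := by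
    intro r X Y
    rw [← algebraMap_smul A r Y, hB_smul_r, algebraMap_smul]
  have hN_zero_v : ∀ X : Derivation R A A, nabla X (0 : V) = 0 := by
    intro X
    have := hN_smulR_v X (0 : R) (0 : V)
    simpa using this
  have hN_neg_v : ∀ (X : Derivation R A A) (v : V), nabla X (-v) = - nabla X v := by
    intro X v
    have := hN_smulR_v X (-1 : R) v
    simpa using this
  have hN_sub_v : ∀ (X : Derivation R A A) (v w : V),
      nabla X (v - w) = nabla X v - nabla X w := by
    intro X v w
    rw [sub_eq_add_neg, hN_add_v, hN_neg_v, sub_eq_add_neg]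
  have hN_neg_X : ∀ (X : Derivation R A A) (v : V), nabla (-X) v = - nabla X v := by
    intro X v
    have := hN_smulR_X (-1 : R) X v
    simpa using this
  have hN_sub_X : ∀ (X Y : Derivation R A A) (v : V),
      nabla (X - Y) v = nabla X v - nabla Y v := by
    intro X Y v
    rw [sub_eq_add_neg, hN_add_X, hN_neg_X, sub_eq_add_neg]
  have hV_zero_l : ∀ v : V, brV 0 v = 0 := by
    intro v
    have := hV_smulR_l (0 : R) 0 v
    simpa using this
  have hV_neg_l : ∀ v w : V, brV (-v) w = - brV v w := by
    intro v w
    have := hV_smulR_l (-1 : R) v w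
    simpa using this
  have hV_neg_r : ∀ v w : V, brV v (-w) = - brV v w := by
    intro v w
    have := hV_smulR_r (-1 : R) v w
    simpa using this
  have hV_sub_l : ∀ u v w : V, brV (u - v) w = brV u w - brV v w := by
    intro u v w; rw [sub_eq_add_neg, hV_add_l, hV_neg_l, sub_eq_add_neg]
  have hV_sub_r : ∀ u v w : V, brV u (v - w) = brV u v - brV u w := by
    intro u v w; rw [sub_eq_add_neg, hV_add_r, hV_neg_r, sub_eq_add_neg]
  have lie_leib : ∀ (f : A) (X Y : Derivation R A A),
      ⁅X, f • Y⁆ = f • ⁅X, Y⁆ + X f • Y := by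
    intro f X Y
    ext a
    simp only [Derivation.commutator_apply, Derivation.add_apply, Derivation.smul_apply,
      Derivation.leibniz, smul_eq_mul]
    ring
  refine ⟨⟨?_, ?_, ?_, ?_, ?_, ?_, ?_⟩, ?_, ?_, ?_⟩
  · -- add_left
    intro X Y Z
    simp only [Prod.fst_add, Prod.snd_add, add_lie, hV_add_l, hN_add_X, hN_add_v,
      hB_add_l, Prod.mk_add_mk]
    refine Prod.ext rfl ?_
    abel
  · -- add_right
    intro X Y Z
    simp only [Prod.fst_add, Prod.snd_add, lie_add, hV_add_r, hN_add_X, hN_add_v,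
      hB_add_r, Prod.mk_add_mk]
    refine Prod.ext rfl ?_
    abel
  · -- smul_left
    intro r X Y
    simp only [Prod.smul_fst, Prod.smul_snd, smul_lie, hV_smulR_l, hN_smulR_X,
      hN_smulR_v, hB_smulR_l, Prod.smul_mk]
    refine Prod.ext rfl ?_
    simp only [smul_add, smul_sub]
  · -- smul_right
    intro r X Y
    simp only [Prod.smul_fst, Prod.smul_snd, lie_smul, hV_smulR_r, hN_smulR_X,
      hN_smulR_v, hB_smulR_r, Prod.smul_mk]
    refine Prod.ext rfl ?_
    simp only [smul_add, smul_sub]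
  · -- alt
    intro X
    refine Prod.ext ?_ ?_
    · simp [lie_self]
    · simp only [hV_alt, hB_alt, Prod.snd_zero]
      abel
  · -- jacobi
    rintro ⟨X₁, v₁⟩ ⟨X₂, v₂⟩ ⟨X₃, v₃⟩
    refine Prod.ext ?_ ?_
    · simpa using lie_jacobi X₁ X₂ X₃
    · simp only [Prod.fst_add, Prod.snd_add, Prod.snd_zero]
      simp only [hV_add_r, hV_sub_r, hN_add_v, hN_sub_v, hN_add_X, hN_sub_X, hN_lie]
      have s1 : brV (B X₂ X₃) v₁ = nabla X₂ (nabla X₃ v₁) - nabla X₃ (nabla X₂ v₁)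
          - nabla ⁅X₂, X₃⁆ v₁ := hB_curv X₂ X₃ v₁
      have s2 : brV (B X₃ X₁) v₂ = nabla X₃ (nabla X₁ v₂) - nabla X₁ (nabla X₃ v₂)
          - nabla ⁅X₃, X₁⁆ v₂ := hB_curv X₃ X₁ v₂
      have s3 : brV (B X₁ X₂) v₃ = nabla X₁ (nabla X₂ v₃) - nabla X₂ (nabla X₁ v₃)
          - nabla ⁅X₁, X₂⁆ v₃ := hB_curv X₁ X₂ v₃
      have c1 : brV v₁ (B X₂ X₃) = -(nabla X₂ (nabla X₃ v₁) - nabla X₃ (nabla X₂ v₁)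
          - nabla ⁅X₂, X₃⁆ v₁) := by rw [hV_skew, s1]
      have c2 : brV v₂ (B X₃ X₁) = -(nabla X₃ (nabla X₁ v₂) - nabla X₁ (nabla X₃ v₂)
          - nabla ⁅X₃, X₁⁆ v₂) := by rw [hV_skew, s2]
      have c3 : brV v₃ (B X₁ X₂) = -(nabla X₁ (nabla X₂ v₃) - nabla X₂ (nabla X₁ v₃)
          - nabla ⁅X₁, X₂⁆ v₃) := by rw [hV_skew, s3]
      rw [c1, c2, c3]
      rw [hV_skew (nabla X₁ v₂) v₃, hV_skew (nabla X₂ v₃) v₁, hV_skew (nabla X₃ v₁) v₂]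
      rw [hB_skew X₁ ⁅X₂, X₃⁆, hB_skew X₂ ⁅X₃, X₁⁆, hB_skew X₃ ⁅X₁, X₂⁆]
      have key : brV v₁ (brV v₂ v₃) + brV v₂ (brV v₃ v₁) + brV v₃ (brV v₁ v₂)
          + ((nabla X₁ (B X₂ X₃) - B ⁅X₁, X₂⁆ X₃) + (nabla X₂ (B X₃ X₁) - B ⁅X₂, X₃⁆ X₁)
            + (nabla X₃ (B X₁ X₂) - B ⁅X₃, X₁⁆ X₂)) = 0 := by
        rw [hV_jacobi, hB_bianchi]
        abel
      linear_combination (norm := abel) key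
  · -- leibniz
    intro f X Y
    refine Prod.ext ?_ ?_
    · simp only [Prod.fst_add, Prod.smul_fst, LinearMap.fst_apply]
      exact lie_leib f X.1 Y.1
    · simp only [Prod.snd_add, Prod.smul_fst, Prod.smul_snd, LinearMap.fst_apply,
        hV_smulA_r, hN_leibniz, hN_smulA_X, hB_smul_r, smul_add, smul_sub]
      abel
  · -- surjective
    intro X
    exact ⟨(X, 0), rfl⟩
  · -- kernel
    intro p
    constructor
    · intro hp
      refine ⟨p.2, ?_⟩
      have : p.1 = 0 := hp
      exact Prod.ext this rfl
    · rintro ⟨v, rfl⟩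
      rfl
  · -- B recovery
    intro X Y
    simp only [hV_alt, hN_zero_v]
    abel
end

section
/- Let V be an A-module such that Der_R(A) ⊕ V is a faithful A-module, and let (Der_R(A) ⊕ V, [[·,·]], pr₁) be a Lie algebroid over A with anchor the projection pr₁. Define [v₁,v₂]_V := pr₂([[(0,v₁),(0,v₂)]]). Then ∇_X(v) := pr₂([[(X,0),(0,v)]]) defines a Lie connection on V with respect to [·,·]_V: ∇ is A-linear in X, satisfies ∇_X(f•v) = X(f)•v + f•∇_X(v), and ∇_X([v₁,v₂]_V) = [∇_X(v₁), v₂]_V + [v₁, ∇_X(v₂)]_V. -/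
/-- for a Lie algebroid `(Der_R(A) ⊕ V, [[·,·]], pr₁)` (with
`Der_R(A) ⊕ V` a faithful `A`-module), the operation
`∇_X(v) := pr₂ [[(X,0),(0,v)]]` is a Lie connection on `V` with respect to
`[v₁,v₂]_V := pr₂ [[(0,v₁),(0,v₂)]]`. -/
theorem induced_connection_on_V
    (R A : Type*) [CommRing R] [CommRing A] [Algebra R A]
    (V : Type*) [AddCommGroup V] [Module R V] [Module A V] [IsScalarTower R A V]
    (br : Derivation R A A × V → Derivation R A A × V → Derivation R A A × V)
    (halg : IsLieAlgebroid R A (Derivation R A A × V) br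
      (LinearMap.fst A (Derivation R A A) V))
    (hfaithful : ∀ f : A, (∀ p : Derivation R A A × V, f • p = 0) → f = 0)
    (brV : V → V → V)
    (hbrV : ∀ v₁ v₂ : V, brV v₁ v₂ = (br ((0 : Derivation R A A), v₁) (0, v₂)).2)
    (nabla : Derivation R A A → V → V)
    (hnabla : ∀ (X : Derivation R A A) (v : V), nabla X v = (br (X, 0) (0, v)).2) :
    (∀ (X Y : Derivation R A A) (v : V), nabla (X + Y) v = nabla X v + nabla Y v) ∧
    (∀ (f : A) (X : Derivation R A A) (v : V), nabla (f • X) v = f • nabla X v) ∧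
    (∀ (X : Derivation R A A) (v w : V), nabla X (v + w) = nabla X v + nabla X w) ∧
    (∀ (X : Derivation R A A) (r : R) (v : V), nabla X (r • v) = r • nabla X v) ∧
    (∀ (X : Derivation R A A) (f : A) (v : V),
      nabla X (f • v) = X f • v + f • nabla X v) ∧
    (∀ (X : Derivation R A A) (v w : V),
      nabla X (brV v w) = brV (nabla X v) w + brV v (nabla X w)) := by
  obtain ⟨hadd_l, hadd_r, _, hsmul_r, halt, hjac, hleib⟩ := halg
  have hleib' : ∀ (f : A) (X Y : Derivation R A A × V),
      br X (f • Y) = f • br X Y + (X.1 f) • Y := fun f X Y => hleib f X Y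
  -- basic bracket identities
  have hzero_r : ∀ X, br X 0 = 0 := by
    intro X
    have h := hadd_r X 0 0
    rw [add_zero] at h
    exact (left_eq_add.mp h)
  have hanti : ∀ X Y, br Y X = - br X Y := by
    intro X Y
    have h := halt (X + Y)
    rw [hadd_l, hadd_r, hadd_r, halt, halt, zero_add, add_zero, add_comm] at h
    exact eq_neg_of_add_eq_zero_left h
  have hneg_r : ∀ X Y, br X (-Y) = - br X Y := by
    intro X Y
    have h := hadd_r X Y (-Y)
    rw [add_neg_cancel, hzero_r, eq_comm, add_comm] at h
    exact eq_neg_of_add_eq_zero_left h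
  -- Jacobi in Leibniz form
  have hjac' : ∀ X Y Z, br (br X Y) Z = br X (br Y Z) - br Y (br X Z) := by
    intro X Y Z
    have h := hjac X Y Z
    rw [hanti X Z, hneg_r, hanti (br X Y) Z] at h
    have h2 : br (br X Y) Z - (br X (br Y Z) - br Y (br X Z)) = 0 := by
      rw [← neg_eq_zero, ← h]
      abel
    exact sub_eq_zero.mp h2
  -- anchor is a Lie algebra morphism
  have hanchor : ∀ (P Q : Derivation R A A × V) (f : A),
      (br P Q).1 f = P.1 (Q.1 f) - Q.1 (P.1 f) := by
    intro P Q f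
    have key : ∀ Z : Derivation R A A × V,
        ((br P Q).1 f - (P.1 (Q.1 f) - Q.1 (P.1 f))) • Z = 0 := by
      intro Z
      have e1 : br (br P Q) (f • Z) = f • br (br P Q) Z + ((br P Q).1 f) • Z :=
        hleib' f (br P Q) Z
      have e2 : br P (br Q (f • Z)) =
          f • br P (br Q Z) + (P.1 f) • br Q Z + (Q.1 f) • br P Z
            + (P.1 (Q.1 f)) • Z := by
        rw [hleib' f Q Z, hadd_r, hleib' f P (br Q Z), hleib' (Q.1 f) P Z]
        abel
      have e3 : br Q (br P (f • Z)) =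
          f • br Q (br P Z) + (Q.1 f) • br P Z + (P.1 f) • br Q Z
            + (Q.1 (P.1 f)) • Z := by
        rw [hleib' f P Z, hadd_r, hleib' f Q (br P Z), hleib' (P.1 f) Q Z]
        abel
      have e4 := hjac' P Q (f • Z)
      rw [e1, e2, e3, hjac' P Q Z, smul_sub] at e4
      have e5 : ((br P Q).1 f) • Z = (P.1 (Q.1 f)) • Z - (Q.1 (P.1 f)) • Z := by
        rw [← sub_eq_zero] at e4 ⊢
        rw [← e4]
        abel
      rw [sub_smul, sub_smul, e5]
      abel
    have := hfaithful _ key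
    rw [sub_eq_zero] at this
    exact this
  -- vertical brackets are vertical
  have hfst0 : ∀ (P Q : Derivation R A A × V), Q.1 = 0 → (br P Q).1 = 0 := by
    intro P Q hQ
    ext f
    have h := hanchor P Q f
    rw [hQ] at h
    simpa using h
  have h0v : ∀ (X : Derivation R A A) (v : V),
      br (X, 0) ((0 : Derivation R A A), v) = (0, nabla X v) := by
    intro X v
    exact Prod.ext (hfst0 _ _ rfl) (hnabla X v).symm
  have h00 : ∀ (v w : V),
      br ((0 : Derivation R A A), v) ((0 : Derivation R A A), w) = (0, brV v w) := by
    intro v w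
    exact Prod.ext (hfst0 _ _ rfl) (hbrV v w).symm
  refine ⟨?_, ?_, ?_, ?_, ?_, ?_⟩
  · intro X Y v
    rw [hnabla, hnabla, hnabla,
      show ((X + Y, (0 : V)) : Derivation R A A × V) = (X, 0) + (Y, 0) by simp,
      hadd_l]
    rfl
  · intro f X v
    rw [hnabla, hnabla,
      show ((f • X, (0 : V)) : Derivation R A A × V) = f • (X, 0) by simp,
      hanti, hleib' f ((0 : Derivation R A A), v) (X, 0)]
    simp only [Derivation.coe_zero, Pi.zero_apply, zero_smul, add_zero]
    rw [hanti ((0 : Derivation R A A), v) (X, 0)]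
    simp [smul_neg]
  · intro X v w
    rw [hnabla, hnabla, hnabla,
      show (((0 : Derivation R A A), v + w) : Derivation R A A × V)
        = (0, v) + (0, w) by simp,
      hadd_r]
    rfl
  · intro X r v
    rw [hnabla, hnabla,
      show (((0 : Derivation R A A), r • v) : Derivation R A A × V)
        = r • (0, v) by simp,
      hsmul_r]
    rfl
  · intro X f v
    rw [hnabla, hnabla,
      show (((0 : Derivation R A A), f • v) : Derivation R A A × V)
        = f • (0, v) by simp,
      hleib' f (X, 0) ((0 : Derivation R A A), v)]
    simp [add_comm]
  · intro X v w
    have e := hjac' (X, 0) ((0 : Derivation R A A), v) ((0 : Derivation R A A), w)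
    rw [h0v X v, h0v X w] at e
    have e2 : br (X, 0) (br ((0 : Derivation R A A), v) (0, w))
        = br ((0 : Derivation R A A), nabla X v) (0, w)
          + br ((0 : Derivation R A A), v) (0, nabla X w) :=
      sub_eq_iff_eq_add.mp e.symm
    rw [hnabla,
      show (((0 : Derivation R A A), brV v w) : Derivation R A A × V)
        = br ((0 : Derivation R A A), v) (0, w) from (h00 v w).symm,
      e2, hbrV (nabla X v) w, hbrV v (nabla X w)]
    rfl
end

section
/- Let V be an A-module such that Der_R(A) ⊕ V is a faithful A-module, and let (Der_R(A) ⊕ V, [[·,·]], pr₁) be a Lie algebroid over A with anchor the projection pr₁. Define [v₁,v₂]_V := pr₂([[(0,v₁),(0,v₂)]]) and ∇_X(v) := pr₂([[(X,0),(0,v)]]). Then B(X,Y) := pr₂([[(X,0),(Y,0)]] − ([X,Y],0)) defines an A-bilinear, alternating map B : Der_R(A) × Der_R(A) → V satisfying: (a) [B(X₁,X₂), v]_V = C_∇(X₁,X₂)(v) for all X₁, X₂ ∈ Der_R(A), v ∈ V, where C_∇(X,Y) = ∇_X∘∇_Y − ∇_Y∘∇_X − ∇_{[X,Y]}; and (b)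 the cyclic sum over (X₁,X₂,X₃) of ∇_{X₁}(B(X₂,X₃)) − B([X₁,X₂], X₃) vanishes. -/
/-- for a Lie algebroid `(Der_R(A) ⊕ V, [[·,·]], pr₁)` (with
`Der_R(A) ⊕ V` a faithful `A`-module), the operation
`B(X,Y) := pr₂ ([[(X,0),(Y,0)]] - ([X,Y],0))` is `A`-bilinear, alternating, its
bracket with any `v` gives the curvature of `∇`, and it satisfies the Bianchi-type
cyclic identity. -/
theorem induced_curvature_form
    (R A : Type*) [CommRing R] [CommRing A] [Algebra R A]
    (V : Type*) [AddCommGroup V] [Module R V] [Module A V] [IsScalarTower R A V]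
    (br : Derivation R A A × V → Derivation R A A × V → Derivation R A A × V)
    (halg : IsLieAlgebroid R A (Derivation R A A × V) br
      (LinearMap.fst A (Derivation R A A) V))
    (hfaithful : ∀ f : A, (∀ p : Derivation R A A × V, f • p = 0) → f = 0)
    (brV : V → V → V)
    (hbrV : ∀ v₁ v₂ : V, brV v₁ v₂ = (br ((0 : Derivation R A A), v₁) (0, v₂)).2)
    (nabla : Derivation R A A → V → V)
    (hnabla : ∀ (X : Derivation R A A) (v : V), nabla X v = (br (X, 0) (0, v)).2)
    (B : Derivation R A A → Derivation R A A → V)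
    (hB : ∀ X Y : Derivation R A A,
      B X Y = (br (X, (0 : V)) (Y, 0) - (⁅X, Y⁆, 0)).2) :
    (∀ X Y Z : Derivation R A A, B (X + Y) Z = B X Z + B Y Z) ∧
    (∀ X Y Z : Derivation R A A, B X (Y + Z) = B X Y + B X Z) ∧
    (∀ (f : A) (X Y : Derivation R A A), B (f • X) Y = f • B X Y) ∧
    (∀ (f : A) (X Y : Derivation R A A), B X (f • Y) = f • B X Y) ∧
    (∀ X : Derivation R A A, B X X = 0) ∧
    (∀ (X₁ X₂ : Derivation R A A) (v : V),
      brV (B X₁ X₂) v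
        = nabla X₁ (nabla X₂ v) - nabla X₂ (nabla X₁ v) - nabla ⁅X₁, X₂⁆ v) ∧
    (∀ X₁ X₂ X₃ : Derivation R A A,
      (nabla X₁ (B X₂ X₃) - B ⁅X₁, X₂⁆ X₃) + (nabla X₂ (B X₃ X₁) - B ⁅X₂, X₃⁆ X₁)
        + (nabla X₃ (B X₁ X₂) - B ⁅X₃, X₁⁆ X₂) = 0) := by
  obtain ⟨add_left, add_right, smul_left, smul_right, alt, jacobi, leibniz⟩ := halg
  simp only [LinearMap.fst_apply] at leibniz
  have hneg_l : ∀ X Y, br (-X) Y = -br X Y := by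
    intro X Y; simpa using smul_left (-1 : R) X Y
  have hsub_l : ∀ X Y Z, br (X - Y) Z = br X Z - br Y Z := by
    intro X Y Z
    rw [sub_eq_add_neg, add_left, hneg_l, sub_eq_add_neg]
  have hanti : ∀ X Y, br Y X = -br X Y := by
    intro X Y
    have h := alt (X + Y)
    rw [add_left, add_right, add_right, alt, alt] at h
    simp only [zero_add, add_zero] at h
    exact eq_neg_of_add_eq_zero_right h
  have hbrbr : ∀ X Y Z, br (br X Y) Z = br X (br Y Z) - br Y (br X Z) := by
    intro X Y Z
    have hj := jacobi X Y Z
    rw [hanti X Z] at hj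
    have h1 : br Y (-br X Z) = -br Y (br X Z) := by
      have := smul_left; simpa using smul_right (-1 : R) Y (br X Z)
    rw [h1] at hj
    have hc : br Z (br X Y) = -(br X (br Y Z) + -br Y (br X Z)) :=
      eq_neg_of_add_eq_zero_right hj
    rw [hanti (br X Y) Z] at hc
    rw [← neg_neg (br (br X Y) Z), hc]
    abel
  -- the anchor preserves brackets
  have hanchor : ∀ P Q : Derivation R A A × V, (br P Q).1 = ⁅P.1, Q.1⁆ := by
    intro P Q
    ext f
    rw [Derivation.commutator_apply]
    have key : ∀ Z : Derivation R A A × V,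
        ((br P Q).1 f - (P.1 (Q.1 f) - Q.1 (P.1 f))) • Z = 0 := by
      intro Z
      have e1 : br (br P Q) (f • Z) = f • br (br P Q) Z + ((br P Q).1 f) • Z :=
        leibniz f (br P Q) Z
      have e4 : br P (br Q (f • Z))
          = f • br P (br Q Z) + (P.1 f) • br Q Z + (Q.1 f) • br P Z
            + (P.1 (Q.1 f)) • Z := by
        rw [leibniz f Q Z, add_right, leibniz f P (br Q Z), leibniz (Q.1 f) P Z]
        abel
      have e5 : br Q (br P (f • Z))
          = f • br Q (br P Z) + (Q.1 f) • br P Z + (P.1 f) • br Q Z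
            + (Q.1 (P.1 f)) • Z := by
        rw [leibniz f P Z, add_right, leibniz f Q (br P Z), leibniz (P.1 f) Q Z]
        abel
      have e6 := hbrbr P Q (f • Z)
      rw [e1, e4, e5, hbrbr P Q Z, smul_sub] at e6
      have e7 : ((br P Q).1 f) • Z = (P.1 (Q.1 f)) • Z - (Q.1 (P.1 f)) • Z := by
        have := e6
        apply add_left_cancel (a := f • br P (br Q Z) - f • br Q (br P Z))
        rw [this]
        abel
      rw [sub_smul, sub_smul, e7]
      abel
    exact sub_eq_zero.mp (hfaithful _ key)
  have hB' : ∀ X Y : Derivation R A A, B X Y = (br (X, (0:V)) (Y, 0)).2 := by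
    intro X Y; rw [hB]; simp
  have hXY : ∀ X Y : Derivation R A A, br (X, (0:V)) (Y, 0) = (⁅X, Y⁆, B X Y) := by
    intro X Y
    refine Prod.ext ?_ ?_
    · rw [hanchor]
    · rw [hB']
  have hXv : ∀ (X : Derivation R A A) (v : V), br (X, (0:V)) (0, v) = (0, nabla X v) := by
    intro X v
    refine Prod.ext ?_ ?_
    · rw [hanchor]; simp
    · rw [hnabla]
  have hBanti : ∀ X Y : Derivation R A A, B Y X = -B X Y := by
    intro X Y
    rw [hB', hB', hanti]
    rfl
  refine ⟨?_, ?_, ?_, ?_, ?_, ?_, ?_⟩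
  · intro X Y Z
    rw [hB' , hB', hB',
      show ((X + Y : Derivation R A A), (0:V)) = (X, (0:V)) + (Y, 0) by
        simp [Prod.ext_iff], add_left]
    rfl
  · intro X Y Z
    rw [hB', hB', hB',
      show ((Y + Z : Derivation R A A), (0:V)) = (Y, (0:V)) + (Z, 0) by
        simp [Prod.ext_iff], add_right]
    rfl
  · intro f X Y
    rw [hB', hB']
    have hfx : ((f • X : Derivation R A A), (0:V)) = f • (X, (0:V)) := by
      simp [Prod.smul_mk]
    rw [hfx, hanti (Y, (0:V)) (f • (X, (0:V))), leibniz]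
    have h2 := congrArg Prod.snd (hanti (X, (0:V)) (Y, (0:V)))
    simp only [Prod.snd_neg] at h2
    simp [h2]
  · intro f X Y
    rw [hB', hB']
    have h : br (X, (0:V)) (f • (Y, (0:V))) = f • br (X, (0:V)) (Y, 0)
        + (X f) • (Y, (0:V)) := leibniz f _ _
    have hfy : (f • (Y, (0:V)) : Derivation R A A × V) = (f • Y, 0) := by
      simp [Prod.smul_mk]
    rw [hfy] at h
    have := congrArg Prod.snd h
    simpa using this
  · intro X
    rw [hB', alt]; rfl
  · intro X₁ X₂ v
    have h0 : ((0 : Derivation R A A), B X₁ X₂)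
        = br (X₁, (0:V)) (X₂, 0) - (⁅X₁, X₂⁆, 0) := by
      rw [hXY]; simp [Prod.ext_iff]
    rw [hbrV, h0, hsub_l, hbrbr, hXv, hXv, hXv, hXv, hXv, hnabla ⁅X₁, X₂⁆ v, hXv]
    simp
  · intro X₁ X₂ X₃
    have hj := congrArg Prod.snd (jacobi (X₁, (0:V)) (X₂, 0) (X₃, 0))
    have expand : ∀ X Y Z : Derivation R A A,
        (br (X, (0:V)) (br (Y, (0:V)) (Z, 0))).2
          = B X ⁅Y, Z⁆ + nabla X (B Y Z) := by
      intro X Y Z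
      rw [hXY, show ((⁅Y, Z⁆ : Derivation R A A), B Y Z)
          = (⁅Y, Z⁆, (0:V)) + (0, B Y Z) by simp [Prod.ext_iff],
        add_right, hXY, hXv]
      rfl
    rw [Prod.snd_add, Prod.snd_add, expand, expand, expand, Prod.snd_zero] at hj
    rw [hBanti ⁅X₂, X₃⁆ X₁, hBanti ⁅X₃, X₁⁆ X₂, hBanti ⁅X₁, X₂⁆ X₃] at hj
    abel_nf at hj ⊢
    exact hj
end

section
/- Let (F, [[·,·]], ρ) be a Lie algebroid over A with F a faithful A-module, V an A-module, ι : V → F an injective A-module map with range ι = ker ρ and ρ surjective, and γ : Der_R(A) → F an A-module map with ρ∘γ = id. Define [v₁,v₂]_V by ι([v₁,v₂]_V) = [[ι(v₁), ι(v₂)]]. Then for all X ∈ Der_R(A) and v ∈ V the element [[γ(X), ι(v)]] lies in the range of ι, and the operation ∇_X(v) defined by ι(∇_X(v)) = [[γ(X), ι(v)]] is a Lie connection on V with respect to [·,·]_V: it is A-linear in X, satisfies ∇_X(f•v) = X(f)•v + f•∇_X(v), and ∇_X([v₁,v₂]_V) = [∇_X(v₁), v₂]_V + [v₁, ∇_X(v₂)]_V.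 -/
section AuxLA
variable {R A : Type*} [CommRing R] [CommRing A] [Algebra R A]
variable {F : Type*} [AddCommGroup F] [Module R F] [Module A F] [IsScalarTower R A F]
variable {br : F → F → F} {ρ : F →ₗ[A] Derivation R A A}

lemma IsLieAlgebroid.neg_right (h : IsLieAlgebroid R A F br ρ) (X Y : F) :
    br X (-Y) = -br X Y := by
  rw [← neg_one_smul R Y, h.smul_right, neg_one_smul]

lemma IsLieAlgebroid.antisym (h : IsLieAlgebroid R A F br ρ) (X Y : F) :
    br X Y = -br Y X := by
  have e := h.alt (X + Y)
  rw [h.add_left, h.add_right, h.add_right, h.alt, h.alt] at e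
  -- e : 0 + br X Y + (br Y X + 0) = 0
  have e2 : br X Y + br Y X = 0 := by simpa using e
  exact eq_neg_of_add_eq_zero_left e2

end AuxLA
section Aux2
variable {R A : Type*} [CommRing R] [CommRing A] [Algebra R A]
variable {F : Type*} [AddCommGroup F] [Module R F] [Module A F] [IsScalarTower R A F]
variable {br : F → F → F} {ρ : F →ₗ[A] Derivation R A A}

lemma IsLieAlgebroid.jacobi' (h : IsLieAlgebroid R A F br ρ) (X Y Z : F) :
    br X (br Y Z) = br Y (br X Z) + br (br X Y) Z := by
  have j := h.jacobi X Y Z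
  rw [h.antisym Z X, h.neg_right, h.antisym Z (br X Y)] at j
  apply eq_of_sub_eq_zero
  rw [← j]; abel

lemma IsLieAlgebroid.anchor_bracket (h : IsLieAlgebroid R A F br ρ)
    (hfaithful : ∀ f : A, (∀ X : F, f • X = 0) → f = 0)
    (X Y : F) (f : A) :
    ρ (br X Y) f = ρ X (ρ Y f) - ρ Y (ρ X f) := by
  have key : ∀ W : F, (ρ X (ρ Y f) - ρ Y (ρ X f) - ρ (br X Y) f) • W = 0 := by
    intro W
    have E1 : br X (br Y (f • W)) =
        f • br X (br Y W) + ρ X f • br Y W + (ρ Y f • br X W + ρ X (ρ Y f) • W) := by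
      rw [h.leibniz f Y W, h.add_right, h.leibniz f X (br Y W), h.leibniz (ρ Y f) X W]
    have E2 : br Y (br X (f • W)) =
        f • br Y (br X W) + ρ Y f • br X W + (ρ X f • br Y W + ρ Y (ρ X f) • W) := by
      rw [h.leibniz f X W, h.add_right, h.leibniz f Y (br X W), h.leibniz (ρ X f) Y W]
    have E3 : br (br X Y) (f • W) = f • br (br X Y) W + ρ (br X Y) f • W :=
      h.leibniz f (br X Y) W
    have J1 := h.jacobi' X Y (f • W)
    have J2 := h.jacobi' X Y W
    rw [E1, E2, E3] at J1
    rw [sub_smul, sub_smul]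
    have hfJ : f • br X (br Y W) = f • br Y (br X W) + f • br (br X Y) W := by
      rw [J2, smul_add]
    -- combine
    rw [hfJ] at J1
    have hz := sub_eq_zero.mpr J1
    rw [← hz]; abel
  have h0 := hfaithful _ key
  linear_combination -h0

end Aux2

/-- in the setting of a transitive Lie algebroid
`V →(ι) F →(ρ) Der_R(A)` on a faithful `A`-module with algebroid connection `γ`,
the element `[[γ X, ι v]]` lies in the range of `ι`, and the induced operation
`∇_X(v)` (with `ι (∇_X v) = [[γ X, ι v]]`) is a Lie connection on `V` with respect
to the bracket `[·,·]_V` induced by `ι ([v₁,v₂]_V) = [[ι v₁, ι v₂]]`. -/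
theorem induced_adjoint_connection
    (R A : Type*) [CommRing R] [CommRing A] [Algebra R A]
    (F : Type*) [AddCommGroup F] [Module R F] [Module A F] [IsScalarTower R A F]
    (V : Type*) [AddCommGroup V] [Module R V] [Module A V] [IsScalarTower R A V]
    (br : F → F → F) (ρ : F →ₗ[A] Derivation R A A)
    (halg : IsLieAlgebroid R A F br ρ)
    (hfaithful : ∀ f : A, (∀ X : F, f • X = 0) → f = 0)
    (ι : V →ₗ[A] F) (hinj : Function.Injective ι)
    (hrange : LinearMap.range ι = LinearMap.ker ρ)
    (hsurj : Function.Surjective ρ)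
    (γ : Derivation R A A →ₗ[A] F) (hsec : ∀ X : Derivation R A A, ρ (γ X) = X)
    (brV : V → V → V)
    (hbrV : ∀ v₁ v₂ : V, ι (brV v₁ v₂) = br (ι v₁) (ι v₂)) :
    ∃ nabla : Derivation R A A → V → V,
      (∀ (X : Derivation R A A) (v : V), ι (nabla X v) = br (γ X) (ι v)) ∧
      (∀ (X Y : Derivation R A A) (v : V), nabla (X + Y) v = nabla X v + nabla Y v) ∧
      (∀ (f : A) (X : Derivation R A A) (v : V), nabla (f • X) v = f • nabla X v) ∧
      (∀ (X : Derivation R A A) (v w : V), nabla X (v + w) = nabla X v + nabla X w) ∧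
      (∀ (X : Derivation R A A) (r : R) (v : V), nabla X (r • v) = r • nabla X v) ∧
      (∀ (X : Derivation R A A) (f : A) (v : V),
        nabla X (f • v) = X f • v + f • nabla X v) ∧
      (∀ (X : Derivation R A A) (v w : V),
        nabla X (brV v w) = brV (nabla X v) w + brV v (nabla X w)) := by
  have hρι : ∀ v : V, ρ (ι v) = 0 := fun v =>
    LinearMap.mem_ker.mp (hrange ▸ LinearMap.mem_range_self ι v)
  have hmem : ∀ (X : Derivation R A A) (v : V),
      br (γ X) (ι v) ∈ LinearMap.range ι := by
    intro X v
    rw [hrange, LinearMap.mem_ker]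
    ext f
    rw [halg.anchor_bracket hfaithful (γ X) (ι v) f, hρι v]
    simp
  choose nabla hspec using fun X v => hmem X v
  refine ⟨nabla, hspec, ?_, ?_, ?_, ?_, ?_, ?_⟩
  · intro X Y v
    apply hinj
    rw [map_add, hspec, hspec, hspec, map_add, halg.add_left]
  · intro f X v
    apply hinj
    rw [map_smul, hspec, hspec, map_smul,
      halg.antisym (f • γ X) (ι v), halg.leibniz f (ι v) (γ X), hρι v,
      halg.antisym (γ X) (ι v)]
    simp
  · intro X v w
    apply hinj
    rw [map_add, hspec, hspec, hspec, map_add, halg.add_right]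
  · intro X r v
    apply hinj
    rw [← algebraMap_smul A r v, ← algebraMap_smul A r (nabla X v),
      map_smul, hspec, hspec, map_smul, halg.leibniz, Derivation.map_algebraMap]
    simp
  · intro X f v
    apply hinj
    rw [map_add, map_smul, map_smul, hspec, hspec, map_smul,
      halg.leibniz f (γ X) (ι v), hsec]
    abel
  · intro X v w
    apply hinj
    rw [map_add, hspec, hbrV, hbrV, hbrV, hspec, hspec,
      halg.jacobi' (γ X) (ι v) (ι w)]
    abel
end

section
/- Let (F, [[·,·]], ρ) be a Lie algebroid over A with F a faithful A-module, V an A-module, ι : V → F an injective A-module map with range ι = ker ρ and ρ surjective, and γ : Der_R(A) → F an A-module map with ρ∘γ = id. Define [v₁,v₂]_V and ∇ via ι([v₁,v₂]_V) = [[ι(v₁), ι(v₂)]] and ι(∇_X(v)) = [[γ(X), ι(v)]]. Then for all X, Y ∈ Der_R(A) the element [[γ(X), γ(Y)]] − γ([X,Y]) lies in the range of ι, and the map B defined by ι(B(X,Y)) = [[γ(X), γ(Y)]] − γ([X,Y]) is A-bilinear, alternating, and satisfies: (a) [B(X₁,X₂), v]_V = C_∇(X₁,X₂)(v) for all X₁,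 X₂ ∈ Der_R(A) and v ∈ V, where C_∇(X,Y) = ∇_X∘∇_Y − ∇_Y∘∇_X − ∇_{[X,Y]}; and (b) the cyclic sum over (X₁,X₂,X₃) of ∇_{X₁}(B(X₂,X₃)) − B([X₁,X₂], X₃) vanishes. -/
/-- in the setting of a transitive Lie algebroid
`V →(ι) F →(ρ) Der_R(A)` on a faithful `A`-module with algebroid connection `γ`,
the element `[[γ X, γ Y]] - γ [X,Y]` lies in the range of `ι` and the induced map
`B` is `A`-bilinear, alternating, realizes the curvature of `∇` via `[·,·]_V`, and
satisfies the Bianchi-type cyclic identity. -/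
theorem induced_curvature_of_connection
    (R A : Type*) [CommRing R] [CommRing A] [Algebra R A]
    (F : Type*) [AddCommGroup F] [Module R F] [Module A F] [IsScalarTower R A F]
    (V : Type*) [AddCommGroup V] [Module R V] [Module A V] [IsScalarTower R A V]
    (br : F → F → F) (ρ : F →ₗ[A] Derivation R A A)
    (halg : IsLieAlgebroid R A F br ρ)
    (hfaithful : ∀ f : A, (∀ X : F, f • X = 0) → f = 0)
    (ι : V →ₗ[A] F) (hinj : Function.Injective ι)
    (hrange : LinearMap.range ι = LinearMap.ker ρ)
    (hsurj : Function.Surjective ρ)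
    (γ : Derivation R A A →ₗ[A] F) (hsec : ∀ X : Derivation R A A, ρ (γ X) = X)
    (brV : V → V → V)
    (hbrV : ∀ v₁ v₂ : V, ι (brV v₁ v₂) = br (ι v₁) (ι v₂))
    (nabla : Derivation R A A → V → V)
    (hnabla : ∀ (X : Derivation R A A) (v : V), ι (nabla X v) = br (γ X) (ι v)) :
    ∃ B : Derivation R A A → Derivation R A A → V,
      (∀ X Y : Derivation R A A, ι (B X Y) = br (γ X) (γ Y) - γ ⁅X, Y⁆) ∧
      (∀ X Y Z : Derivation R A A, B (X + Y) Z = B X Z + B Y Z) ∧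
      (∀ X Y Z : Derivation R A A, B X (Y + Z) = B X Y + B X Z) ∧
      (∀ (f : A) (X Y : Derivation R A A), B (f • X) Y = f • B X Y) ∧
      (∀ (f : A) (X Y : Derivation R A A), B X (f • Y) = f • B X Y) ∧
      (∀ X : Derivation R A A, B X X = 0) ∧
      (∀ (X₁ X₂ : Derivation R A A) (v : V),
        brV (B X₁ X₂) v
          = nabla X₁ (nabla X₂ v) - nabla X₂ (nabla X₁ v) - nabla ⁅X₁, X₂⁆ v) ∧
      (∀ X₁ X₂ X₃ : Derivation R A A,
        (nabla X₁ (B X₂ X₃) - B ⁅X₁, X₂⁆ X₃) + (nabla X₂ (B X₃ X₁) - B ⁅X₂, X₃⁆ X₁)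
          + (nabla X₃ (B X₁ X₂) - B ⁅X₃, X₁⁆ X₂) = 0) := by
  classical
  -- basic bracket facts
  have br0r : ∀ X : F, br X 0 = 0 := by
    intro X
    have h := halg.add_right X 0 0
    rw [add_zero] at h
    exact (left_eq_add.mp h)
  have antisymm : ∀ X Y : F, br X Y = -br Y X := by
    intro X Y
    have h := halg.alt (X + Y)
    rw [halg.add_left, halg.add_right, halg.add_right, halg.alt, halg.alt,
      zero_add, add_zero] at h
    exact eq_neg_of_add_eq_zero_left h
  have brnegr : ∀ X Y : F, br X (-Y) = -br X Y := by
    intro X Y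
    have h := halg.add_right X Y (-Y)
    rw [add_neg_cancel, br0r] at h
    exact (eq_neg_of_add_eq_zero_right h.symm)
  have brsubr : ∀ X Y Z : F, br X (Y - Z) = br X Y - br X Z := by
    intro X Y Z
    rw [sub_eq_add_neg, halg.add_right, brnegr, sub_eq_add_neg]
  have leib_left : ∀ (f : A) (X Y : F), br (f • X) Y = f • br X Y - ρ Y f • X := by
    intro f X Y
    rw [antisymm (f • X) Y, halg.leibniz, antisymm X Y, smul_neg]
    abel
  -- the rearranged Jacobi identity
  have jac' : ∀ X Y Z : F, br X (br Y Z) - br Y (br X Z) - br (br X Y) Z = 0 := by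
    intro X Y Z
    have h := halg.jacobi X Y Z
    rw [antisymm Z X, brnegr, antisymm Z (br X Y)] at h
    rw [← h]
    abel
  -- the anchor is a Lie algebra morphism
  have hanchor : ∀ X Y : F, ρ (br X Y) = ⁅ρ X, ρ Y⁆ := by
    intro X Y
    ext f
    have key : ∀ Z : F, (⁅ρ X, ρ Y⁆ f - ρ (br X Y) f) • Z = 0 := by
      intro Z
      have e1 : br X (br Y (f • Z))
          = f • br X (br Y Z) + ρ X f • br Y Z + ρ Y f • br X Z
            + (ρ X (ρ Y f)) • Z := by
        rw [halg.leibniz, halg.add_right, halg.leibniz, halg.leibniz]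
        abel
      have e2 : br Y (br (f • Z) X)
          = -(f • br Y (br X Z)) - ρ Y f • br X Z - ρ X f • br Y Z
            - (ρ Y (ρ X f)) • Z := by
        rw [antisymm (f • Z) X, halg.leibniz, brnegr, halg.add_right,
          halg.leibniz, halg.leibniz]
        abel
      have e3 : br (f • Z) (br X Y)
          = -(f • br (br X Y) Z) - (ρ (br X Y) f) • Z := by
        rw [antisymm (f • Z) (br X Y), halg.leibniz]
        abel
      have h := halg.jacobi X Y (f • Z)
      rw [e1, e2, e3] at h
      have hj := jac' X Y Z
      have hcomm : ⁅ρ X, ρ Y⁆ f = ρ X (ρ Y f) - ρ Y (ρ X f) := by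
        simp [Derivation.commutator_apply]
      rw [hcomm]
      have := congrArg (f • ·) hj
      simp only [smul_sub, smul_zero] at this
      rw [sub_smul, sub_smul]
      linear_combination (norm := abel) h - this
    have := hfaithful _ (fun Z => key Z)
    have h2 : ⁅ρ X, ρ Y⁆ f = ρ (br X Y) f := by
      have := sub_eq_zero.mp this
      exact this
    exact h2.symm
  -- the defining elements lie in the range of ι
  have hker : ∀ X Y : Derivation R A A,
      br (γ X) (γ Y) - γ ⁅X, Y⁆ ∈ LinearMap.range ι := by
    intro X Y
    rw [hrange, LinearMap.mem_ker, map_sub, hanchor, hsec, hsec, hsec, sub_self]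
  set B : Derivation R A A → Derivation R A A → V :=
    fun X Y => (hker X Y).choose with hBdef
  have hB : ∀ X Y : Derivation R A A, ι (B X Y) = br (γ X) (γ Y) - γ ⁅X, Y⁆ :=
    fun X Y => (hker X Y).choose_spec
  -- smul formulas for the derivation bracket
  have dsmul_left : ∀ (f : A) (X Y : Derivation R A A),
      ⁅f • X, Y⁆ = f • ⁅X, Y⁆ - (Y f) • X := by
    intro f X Y
    ext g
    simp only [Derivation.commutator_apply, Derivation.sub_apply,
      Derivation.smul_apply, smul_eq_mul, Derivation.leibniz]
    ring
  have dsmul_right : ∀ (f : A) (X Y : Derivation R A A),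
      ⁅X, f • Y⁆ = f • ⁅X, Y⁆ + (X f) • Y := by
    intro f X Y
    ext g
    simp only [Derivation.commutator_apply, Derivation.add_apply,
      Derivation.smul_apply, smul_eq_mul, Derivation.leibniz]
    ring
  refine ⟨B, hB, ?_, ?_, ?_, ?_, ?_, ?_, ?_⟩
  · -- additivity on the left
    intro X Y Z
    apply hinj
    rw [map_add, hB, hB, hB, map_add, halg.add_left, add_lie, map_add]
    abel
  · -- additivity on the right
    intro X Y Z
    apply hinj
    rw [map_add, hB, hB, hB, map_add, halg.add_right, lie_add, map_add]
    abel
  · -- A-linearity on the left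
    intro f X Y
    apply hinj
    rw [map_smul, hB, hB, map_smul, leib_left, dsmul_left, map_sub, map_smul,
      map_smul, hsec, smul_sub]
    abel
  · -- A-linearity on the right
    intro f X Y
    apply hinj
    rw [map_smul, hB, hB, map_smul, halg.leibniz, dsmul_right, map_add, map_smul,
      map_smul, hsec, smul_sub]
    abel
  · -- alternating
    intro X
    apply hinj
    rw [hB, map_zero, halg.alt, lie_self, map_zero, sub_zero]
  · -- curvature identity
    intro X₁ X₂ v
    apply hinj
    rw [hbrV, hB, map_sub, map_sub, hnabla, hnabla, hnabla, hnabla, hnabla,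
      antisymm (br (γ X₁) (γ X₂) - γ ⁅X₁, X₂⁆) (ι v), brsubr]
    have hj := jac' (γ X₁) (γ X₂) (ι v)
    have : br (br (γ X₁) (γ X₂)) (ι v)
        = br (γ X₁) (br (γ X₂) (ι v)) - br (γ X₂) (br (γ X₁) (ι v)) := by
      linear_combination (norm := abel) -hj
    rw [antisymm (ι v) (br (γ X₁) (γ X₂)), antisymm (ι v) (γ ⁅X₁, X₂⁆), this]
    abel
  · -- Bianchi identity
    intro X₁ X₂ X₃
    apply hinj
    rw [map_zero, map_add, map_add, map_sub, map_sub, map_sub,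
      hnabla, hnabla, hnabla, hB, hB, hB, hB, hB, hB,
      brsubr, brsubr, brsubr]
    have hj1 := halg.jacobi (γ X₁) (γ X₂) (γ X₃)
    have hjd : ⁅⁅X₁, X₂⁆, X₃⁆ + ⁅⁅X₂, X₃⁆, X₁⁆ + ⁅⁅X₃, X₁⁆, X₂⁆ = 0 := by
      have h := lie_jacobi X₁ X₂ X₃
      have h2 : -(⁅X₁, ⁅X₂, X₃⁆⁆ + ⁅X₂, ⁅X₃, X₁⁆⁆ + ⁅X₃, ⁅X₁, X₂⁆⁆) = 0 := by
        rw [h, neg_zero]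
      rw [← lie_skew ⁅X₁, X₂⁆ X₃, ← lie_skew ⁅X₂, X₃⁆ X₁, ← lie_skew ⁅X₃, X₁⁆ X₂,
        ← h2]
      abel
    have hγ : γ ⁅⁅X₁, X₂⁆, X₃⁆ + γ ⁅⁅X₂, X₃⁆, X₁⁆ + γ ⁅⁅X₃, X₁⁆, X₂⁆ = 0 := by
      rw [← map_add, ← map_add, hjd, map_zero]
    have hc1 : br (γ ⁅X₁, X₂⁆) (γ X₃) = -br (γ X₃) (γ ⁅X₁, X₂⁆) :=
      antisymm _ _
    have hc2 : br (γ ⁅X₂, X₃⁆) (γ X₁) = -br (γ X₁) (γ ⁅X₂, X₃⁆) :=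
      antisymm _ _
    have hc3 : br (γ ⁅X₃, X₁⁆) (γ X₂) = -br (γ X₂) (γ ⁅X₃, X₁⁆) :=
      antisymm _ _
    rw [hc1, hc2, hc3]
    linear_combination (norm := abel) hj1 + hγ
end

section
/- Let (F, [[·,·]], ρ) be a Lie algebroid over A with F a faithful A-module, V an A-module, ι : V → F an injective A-module map with range ι = ker ρ and ρ surjective, and γ : Der_R(A) → F an A-module map with ρ∘γ = id. Let [·,·]_V, ∇ and B be defined by ι([v₁,v₂]_V) = [[ι(v₁), ι(v₂)]], ι(∇_X(v)) = [[γ(X), ι(v)]] and ι(B(X,Y)) = [[γ(X), γ(Y)]] − γ([X,Y]). Define on Der_R(A) ⊕ V the bracket ⟨(X₁,v₁),(X₂,v₂)⟩ = ([X₁,X₂], [v₁,v₂]_V + ∇_{X₁}(v₂) − ∇_{X₂}(v₁) + B(X₁,X₂)). Then the map φ : Der_R(A) ⊕ V → F, φ(X,v) = γ(X) + ι(v), is an A-module isomorphism satisfying ρ∘φ = pr₁ and φ(⟨u,w⟩) = [[φ(u), φ(w)]] for all u, w ∈ Der_R(A) ⊕ V; in particular ⟨·,·⟩ is a Lie bracket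 and (Der_R(A) ⊕ V, ⟨·,·⟩, pr₁) is a Lie algebroid isomorphic to (F, [[·,·]], ρ). -/
/-- in the setting of a transitive Lie algebroid
`V →(ι) F →(ρ) Der_R(A)` on a faithful `A`-module with algebroid connection `γ`,
with `[·,·]_V`, `∇` and `B` induced as before, the map `φ(X,v) = γ X + ι v` is an
`A`-module isomorphism intertwining the anchors and the brackets; in particular the
displayed bracket `⟨·,·⟩` makes `(Der_R(A) ⊕ V, ⟨·,·⟩, pr₁)` a Lie algebroid
isomorphic to `(F, [[·,·]], ρ)`. -/
theorem transitive_algebroid_iso_trivial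
    (R A : Type*) [CommRing R] [CommRing A] [Algebra R A]
    (F : Type*) [AddCommGroup F] [Module R F] [Module A F] [IsScalarTower R A F]
    (V : Type*) [AddCommGroup V] [Module R V] [Module A V] [IsScalarTower R A V]
    (br : F → F → F) (ρ : F →ₗ[A] Derivation R A A)
    (halg : IsLieAlgebroid R A F br ρ)
    (hfaithful : ∀ f : A, (∀ X : F, f • X = 0) → f = 0)
    (ι : V →ₗ[A] F) (hinj : Function.Injective ι)
    (hrange : LinearMap.range ι = LinearMap.ker ρ)
    (hsurj : Function.Surjective ρ)
    (γ : Derivation R A A →ₗ[A] F) (hsec : ∀ X : Derivation R A A, ρ (γ X) = X)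
    (brV : V → V → V)
    (hbrV : ∀ v₁ v₂ : V, ι (brV v₁ v₂) = br (ι v₁) (ι v₂))
    (nabla : Derivation R A A → V → V)
    (hnabla : ∀ (X : Derivation R A A) (v : V), ι (nabla X v) = br (γ X) (ι v))
    (B : Derivation R A A → Derivation R A A → V)
    (hB : ∀ X Y : Derivation R A A, ι (B X Y) = br (γ X) (γ Y) - γ ⁅X, Y⁆) :
    Function.Bijective
      (γ.comp (LinearMap.fst A (Derivation R A A) V)
        + ι.comp (LinearMap.snd A (Derivation R A A) V)) ∧
    (∀ p : Derivation R A A × V,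
      ρ ((γ.comp (LinearMap.fst A (Derivation R A A) V)
        + ι.comp (LinearMap.snd A (Derivation R A A) V)) p) = p.1) ∧
    (∀ u w : Derivation R A A × V,
      (γ.comp (LinearMap.fst A (Derivation R A A) V)
        + ι.comp (LinearMap.snd A (Derivation R A A) V))
        ((fun p q => ((⁅p.1, q.1⁆ : Derivation R A A),
            brV p.2 q.2 + nabla p.1 q.2 - nabla q.1 p.2 + B p.1 q.1)) u w)
      = br ((γ.comp (LinearMap.fst A (Derivation R A A) V)
          + ι.comp (LinearMap.snd A (Derivation R A A) V)) u)
          ((γ.comp (LinearMap.fst A (Derivation R A A) V)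
          + ι.comp (LinearMap.snd A (Derivation R A A) V)) w)) ∧
    IsLieAlgebroid R A (Derivation R A A × V)
      (fun p q => ((⁅p.1, q.1⁆ : Derivation R A A),
        brV p.2 q.2 + nabla p.1 q.2 - nabla q.1 p.2 + B p.1 q.1))
      (LinearMap.fst A (Derivation R A A) V) := by

  set φ := γ.comp (LinearMap.fst A (Derivation R A A) V)
        + ι.comp (LinearMap.snd A (Derivation R A A) V) with hφdef
  have hφ_apply : ∀ p : Derivation R A A × V, φ p = γ p.1 + ι p.2 := fun p => rfl
  have hker : ∀ v : V, ρ (ι v) = 0 := by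
    intro v
    have h : ι v ∈ LinearMap.ker ρ := hrange ▸ LinearMap.mem_range_self ι v
    exact h
  have hρφ : ∀ p : Derivation R A A × V, ρ (φ p) = p.1 := by
    intro p
    rw [hφ_apply, map_add, hsec, hker, add_zero]
  have hskew : ∀ X Y : F, br Y X = - br X Y := by
    intro X Y
    have h := halg.alt (X + Y)
    rw [halg.add_left, halg.add_right, halg.add_right, halg.alt, halg.alt] at h
    have h2 : br X Y + br Y X = 0 := by
      have h3 : (0 : F) + br X Y + (br Y X + 0) = 0 := h
      simpa using h3
    exact eq_neg_of_add_eq_zero_right h2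
  have hcomp : ∀ u w : Derivation R A A × V,
      φ (((⁅u.1, w.1⁆ : Derivation R A A),
         brV u.2 w.2 + nabla u.1 w.2 - nabla w.1 u.2 + B u.1 w.1))
      = br (φ u) (φ w) := by
    intro u w
    rw [hφ_apply, hφ_apply, hφ_apply]
    show γ ⁅u.1, w.1⁆ + ι (brV u.2 w.2 + nabla u.1 w.2 - nabla w.1 u.2 + B u.1 w.1) = _
    rw [map_add, map_sub, map_add, hbrV, hnabla, hnabla, hB,
        halg.add_left, halg.add_right, halg.add_right,
        hskew (γ w.1) (ι u.2)]
    abel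
  have hφinj : Function.Injective φ := by
    intro p q h
    have h1 : p.1 = q.1 := by
      have := congrArg ρ h
      rwa [hρφ, hρφ] at this
    have h2 : ι p.2 = ι q.2 := by
      have := h
      rw [hφ_apply, hφ_apply, h1] at this
      exact add_left_cancel this
    exact Prod.ext h1 (hinj h2)
  have hφsurj : Function.Surjective φ := by
    intro f
    obtain ⟨v, hv⟩ : f - γ (ρ f) ∈ LinearMap.range ι := by
      rw [hrange]
      simp [hsec]
    refine ⟨(ρ f, v), ?_⟩
    rw [hφ_apply]
    show γ (ρ f) + ι v = f
    rw [hv]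
    abel
  refine ⟨⟨hφinj, hφsurj⟩, hρφ, fun u w => hcomp u w, ?_⟩
  constructor
  · intro X Y Z
    apply hφinj
    show φ _ = φ (_ + _)
    rw [map_add, hcomp, hcomp, hcomp, map_add, halg.add_left]
  · intro X Y Z
    apply hφinj
    show φ _ = φ (_ + _)
    rw [map_add, hcomp, hcomp, hcomp, map_add, halg.add_right]
  · intro r X Y
    apply hφinj
    show φ _ = φ (r • _)
    rw [LinearMap.map_smul_of_tower, hcomp, hcomp, LinearMap.map_smul_of_tower, halg.smul_left]
  · intro r X Y
    apply hφinj
    show φ _ = φ (r • _)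
    rw [LinearMap.map_smul_of_tower, hcomp, hcomp, LinearMap.map_smul_of_tower, halg.smul_right]
  · intro X
    apply hφinj
    show φ _ = φ 0
    rw [map_zero, hcomp, halg.alt]
  · intro X Y Z
    apply hφinj
    show φ (_ + _ + _) = φ 0
    rw [map_zero, map_add, map_add, hcomp, hcomp, hcomp, hcomp, hcomp, hcomp,
        halg.jacobi]
  · intro f X Y
    apply hφinj
    show φ _ = φ (f • _ + _ • _)
    rw [hcomp, map_smul, halg.leibniz, hρφ, map_add, map_smul, map_smul, hcomp]
    rfl
end

section
/- Let (A, {·,·}_A) be a Poisson algebra over R, V an A-module such that Der_R(A) ⊕ V is a faithful A-module, and (Der_R(A) ⊕ V, [[·,·]], pr₁) a Lie algebroid over A with anchor pr₁. Let [v₁,v₂]_V := pr₂([[(0,v₁),(0,v₂)]]), ∇_X(v) := pr₂([[(X,0),(0,v)]]) and B(X,Y) := pr₂([[(X,0),(Y,0)]] − ([X,Y],0)), and for f ∈ A let X_f := {f,·}_A ∈ Der_R(A). Then A ⊕ V, equipped with the square-zero extension product (f₁,v₁)·(f₂,v₂) = (f₁f₂, f₁•v₂ + f₂•v₁) and the bracket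 {(f₁,v₁),(f₂,v₂)} = ({f₁,f₂}_A, ∇_{X_{f₁}}(v₂) − ∇_{X_{f₂}}(v₁) + [v₁,v₂]_V + B(X_{f₁}, X_{f₂})), is a Poisson algebra over R: the bracket is R-bilinear, skew-symmetric, satisfies the Jacobi identity, and the Leibniz rule with respect to the product. -/
/-- given a Poisson algebra `(A, P)` over `R` and a Lie algebroid
`(Der_R(A) ⊕ V, [[·,·]], pr₁)` (with `Der_R(A) ⊕ V` a faithful `A`-module), the
square-zero extension `A ⊕ V` equipped with the product
`(f₁,v₁)·(f₂,v₂) = (f₁f₂, f₁•v₂ + f₂•v₁)` and the displayed bracket is a Poisson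
algebra over `R`. -/
theorem poisson_on_square_zero_extension
    (R A : Type*) [CommRing R] [CommRing A] [Algebra R A]
    (V : Type*) [AddCommGroup V] [Module R V] [Module A V] [IsScalarTower R A V]
    (P : A → A → A)
    (hPadd_l : ∀ f g h : A, P (f + g) h = P f h + P g h)
    (hPadd_r : ∀ f g h : A, P f (g + h) = P f g + P f h)
    (hPsmul_l : ∀ (r : R) (f g : A), P (r • f) g = r • P f g)
    (hPsmul_r : ∀ (r : R) (f g : A), P f (r • g) = r • P f g)
    (hPskew : ∀ f g : A, P f g = - P g f)
    (hPjacobi : ∀ f g h : A, P f (P g h) + P g (P h f) + P h (P f g) = 0)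
    (hPleibniz : ∀ f g h : A, P f (g * h) = P f g * h + g * P f h)
    (Xf : A → Derivation R A A) (hXf : ∀ f g : A, Xf f g = P f g)
    (br : Derivation R A A × V → Derivation R A A × V → Derivation R A A × V)
    (halg : IsLieAlgebroid R A (Derivation R A A × V) br
      (LinearMap.fst A (Derivation R A A) V))
    (hfaithful : ∀ f : A, (∀ p : Derivation R A A × V, f • p = 0) → f = 0)
    (brV : V → V → V)
    (hbrV : ∀ v₁ v₂ : V, brV v₁ v₂ = (br ((0 : Derivation R A A), v₁) (0, v₂)).2)
    (nabla : Derivation R A A → V → V)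
    (hnabla : ∀ (X : Derivation R A A) (v : V), nabla X v = (br (X, 0) (0, v)).2)
    (B : Derivation R A A → Derivation R A A → V)
    (hB : ∀ X Y : Derivation R A A,
      B X Y = (br (X, (0 : V)) (Y, 0) - (⁅X, Y⁆, 0)).2)
    (mul : A × V → A × V → A × V)
    (hmul : ∀ p q : A × V, mul p q = (p.1 * q.1, p.1 • q.2 + q.1 • p.2))
    (PB : A × V → A × V → A × V)
    (hPB : ∀ p q : A × V,
      PB p q = (P p.1 q.1,
        nabla (Xf p.1) q.2 - nabla (Xf q.1) p.2 + brV p.2 q.2 + B (Xf p.1) (Xf q.1))) :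
    (∀ p q s : A × V, PB (p + q) s = PB p s + PB q s) ∧
    (∀ p q s : A × V, PB p (q + s) = PB p q + PB p s) ∧
    (∀ (r : R) (p q : A × V), PB (r • p) q = r • PB p q) ∧
    (∀ (r : R) (p q : A × V), PB p (r • q) = r • PB p q) ∧
    (∀ p q : A × V, PB p q = - PB q p) ∧
    (∀ p q s : A × V, PB p (PB q s) + PB q (PB s p) + PB s (PB p q) = 0) ∧
    (∀ p q s : A × V, PB p (mul q s) = mul (PB p q) s + mul q (PB p s)) := by

  -- basic consequences of the axioms for `P`
  have hP0r : ∀ f : A, P f 0 = 0 := by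
    intro f
    have h := hPadd_r f 0 0
    simp only [add_zero] at h
    exact (left_eq_add.mp h)
  have hPneg_r : ∀ f g : A, P f (-g) = - P f g := by
    intro f g
    have h := hPadd_r f g (-g)
    rw [add_neg_cancel, hP0r] at h
    linear_combination -h
  -- additivity etc. of the hamiltonian map `Xf`
  have hXadd : ∀ f g : A, Xf (f + g) = Xf f + Xf g := by
    intro f g; ext h
    simp only [Derivation.add_apply, hXf, hPadd_l]
  have hXsmul : ∀ (r : R) (f : A), Xf (r • f) = r • Xf f := by
    intro r f; ext h
    simp only [Derivation.smul_apply, hXf, hPsmul_l]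
  have hXP : ∀ f g : A, Xf (P f g) = ⁅Xf f, Xf g⁆ := by
    intro f g; ext h
    simp only [Derivation.commutator_apply, hXf]
    have hj := hPjacobi f g h
    have s1 : P (P f g) h = - P h (P f g) := hPskew _ _
    have s3 : P g (P h f) = - P g (P f h) := by rw [hPskew h f, hPneg_r]
    linear_combination s1 + s3 - hj
  have hXmul : ∀ f g : A, Xf (f * g) = f • Xf g + g • Xf f := by
    intro f g; ext h
    simp only [Derivation.add_apply, Derivation.smul_apply, smul_eq_mul, hXf]
    have t1 : P (f * g) h = - P h (f * g) := hPskew _ _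
    have t2 := hPleibniz h f g
    have t3 : P h f = - P f h := hPskew _ _
    have t4 : P h g = - P g h := hPskew _ _
    linear_combination t1 - t2 - g * t3 - f * t4
  -- skew-symmetry of the algebroid bracket
  have hskew : ∀ X Y : Derivation R A A × V, br X Y = - br Y X := by
    intro X Y
    have h := halg.alt (X + Y)
    rw [halg.add_left, halg.add_right, halg.add_right, halg.alt, halg.alt] at h
    rw [zero_add, add_zero] at h
    rw [← sub_eq_zero, show br X Y - -br Y X = br X Y + br Y X from by abel, h]
  -- rearranged Jacobi identity
  have hnegr : ∀ X W : Derivation R A A × V, br X (-W) = - br X W := by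
    intro X W
    rw [← neg_one_smul R W, halg.smul_right, neg_one_smul]
  have hjac : ∀ X Y Z : Derivation R A A × V,
      br (br X Y) Z = br X (br Y Z) - br Y (br X Z) := by
    intro X Y Z
    have h := halg.jacobi X Y Z
    rw [hskew Z X, hnegr, hskew Z (br X Y)] at h
    rw [← sub_eq_zero, show br (br X Y) Z - (br X (br Y Z) - br Y (br X Z))
      = -(br X (br Y Z) + -br Y (br X Z) + -br (br X Y) Z) from by abel, h, neg_zero]
  -- the anchor is a Lie algebra morphism
  have hanchor : ∀ X Y : Derivation R A A × V, (br X Y).1 = ⁅X.1, Y.1⁆ := by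
    intro X Y
    ext f
    rw [Derivation.commutator_apply]
    have key : ∀ Z : Derivation R A A × V,
        ((br X Y).1 f - (X.1 (Y.1 f) - Y.1 (X.1 f))) • Z = 0 := by
      intro Z
      have e1 : br Y (f • Z) = f • br Y Z + Y.1 f • Z := by
        simpa using halg.leibniz f Y Z
      have e1' : br X (f • Z) = f • br X Z + X.1 f • Z := by
        simpa using halg.leibniz f X Z
      have e2 : br X (br Y (f • Z))
          = f • br X (br Y Z) + X.1 f • br Y Z + (Y.1 f • br X Z + X.1 (Y.1 f) • Z) := by
        rw [e1, halg.add_right]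
        have := halg.leibniz f X (br Y Z)
        have h2 := halg.leibniz (Y.1 f) X Z
        simp only [LinearMap.fst_apply] at this h2
        rw [this, h2]
      have e3 : br Y (br X (f • Z))
          = f • br Y (br X Z) + Y.1 f • br X Z + (X.1 f • br Y Z + Y.1 (X.1 f) • Z) := by
        rw [e1', halg.add_right]
        have := halg.leibniz f Y (br X Z)
        have h2 := halg.leibniz (X.1 f) Y Z
        simp only [LinearMap.fst_apply] at this h2
        rw [this, h2]
      have e4 : br (br X Y) (f • Z) = f • br (br X Y) Z + (br X Y).1 f • Z := by
        simpa using halg.leibniz f (br X Y) Z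
      have e7 := hjac X Y (f • Z)
      rw [e2, e3, e4, hjac X Y Z, smul_sub] at e7
      rw [sub_smul, sub_smul]
      linear_combination (norm := module) e7
    have h0 := hfaithful _ key
    have := sub_eq_zero.mp h0
    rw [this]
  -- the key computation: `br` on hamiltonian lifts realizes `PB`
  have snd_PB : ∀ p q : A × V, (PB p q).2 = (br (Xf p.1, p.2) (Xf q.1, q.2)).2 := by
    intro p q
    have hsplit : ((Xf p.1, p.2) : Derivation R A A × V)
        = (Xf p.1, (0 : V)) + ((0 : Derivation R A A), p.2) := by
      simp [Prod.ext_iff]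
    have hsplit' : ((Xf q.1, q.2) : Derivation R A A × V)
        = (Xf q.1, (0 : V)) + ((0 : Derivation R A A), q.2) := by
      simp [Prod.ext_iff]
    rw [hsplit, hsplit', halg.add_left, halg.add_right, halg.add_right]
    have hBeq : B (Xf p.1) (Xf q.1) = (br (Xf p.1, (0:V)) (Xf q.1, 0)).2 := by
      rw [hB]; simp
    have hcross : (br ((0 : Derivation R A A), p.2) (Xf q.1, (0:V))).2
        = - nabla (Xf q.1) p.2 := by
      rw [hskew, hnabla]; simp
    rw [hPB]
    simp only [Prod.snd_add]
    rw [hcross, ← hBeq, ← hnabla, ← hbrV]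
    abel
  have hkey : ∀ p q : A × V,
      br (Xf p.1, p.2) (Xf q.1, q.2) = (Xf (P p.1 q.1), (PB p q).2) := by
    intro p q
    refine Prod.ext ?_ (snd_PB p q).symm
    rw [hanchor]
    simp only
    rw [hXP]
  have fst_PB : ∀ p q : A × V, (PB p q).1 = P p.1 q.1 := by
    intro p q; rw [hPB]
  -- now the seven statements
  refine ⟨?_, ?_, ?_, ?_, ?_, ?_, ?_⟩
  · intro p q s
    refine Prod.ext ?_ ?_
    · simp only [Prod.fst_add, fst_PB, hPadd_l]
    · have e : ((Xf (p + q).1, (p + q).2) : Derivation R A A × V)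
          = (Xf p.1, p.2) + (Xf q.1, q.2) := by
        simp [Prod.ext_iff, hXadd]
      rw [Prod.snd_add, snd_PB, snd_PB, snd_PB, e, halg.add_left, Prod.snd_add]
  · intro p q s
    refine Prod.ext ?_ ?_
    · simp only [Prod.fst_add, fst_PB, hPadd_r]
    · have e : ((Xf (q + s).1, (q + s).2) : Derivation R A A × V)
          = (Xf q.1, q.2) + (Xf s.1, s.2) := by
        simp [Prod.ext_iff, hXadd]
      rw [Prod.snd_add, snd_PB, snd_PB, snd_PB, e, halg.add_right, Prod.snd_add]
  · intro r p q
    refine Prod.ext ?_ ?_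
    · simp only [Prod.smul_fst, fst_PB, hPsmul_l]
    · have e : ((Xf (r • p).1, (r • p).2) : Derivation R A A × V)
          = r • (Xf p.1, p.2) := by
        simp [Prod.ext_iff, hXsmul]
      rw [Prod.smul_snd, snd_PB, snd_PB, e, halg.smul_left, Prod.smul_snd]
  · intro r p q
    refine Prod.ext ?_ ?_
    · simp only [Prod.smul_fst, fst_PB, hPsmul_r]
    · have e : ((Xf (r • q).1, (r • q).2) : Derivation R A A × V)
          = r • (Xf q.1, q.2) := by
        simp [Prod.ext_iff, hXsmul]
      rw [Prod.smul_snd, snd_PB, snd_PB, e, halg.smul_right, Prod.smul_snd]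
  · intro p q
    refine Prod.ext ?_ ?_
    · simp only [Prod.fst_neg, fst_PB]; exact hPskew _ _
    · simp only [Prod.snd_neg, snd_PB]
      rw [hskew, Prod.snd_neg]
  · intro p q s
    refine Prod.ext ?_ ?_
    · simp only [Prod.fst_add, Prod.fst_zero, fst_PB]
      exact hPjacobi _ _ _
    · simp only [Prod.snd_add, Prod.snd_zero]
      rw [snd_PB p (PB q s), snd_PB q (PB s p), snd_PB s (PB p q)]
      have eqs : ∀ a b : A × V,
          ((Xf (PB a b).1, (PB a b).2) : Derivation R A A × V)
            = br (Xf a.1, a.2) (Xf b.1, b.2) := by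
        intro a b
        rw [hkey a b, fst_PB]
      rw [eqs q s, eqs s p, eqs p q]
      have h := halg.jacobi (Xf p.1, p.2) (Xf q.1, q.2) (Xf s.1, s.2)
      calc (br (Xf p.1, p.2) (br (Xf q.1, q.2) (Xf s.1, s.2))).2
            + (br (Xf q.1, q.2) (br (Xf s.1, s.2) (Xf p.1, p.2))).2
            + (br (Xf s.1, s.2) (br (Xf p.1, p.2) (Xf q.1, q.2))).2
          = (br (Xf p.1, p.2) (br (Xf q.1, q.2) (Xf s.1, s.2))
            + br (Xf q.1, q.2) (br (Xf s.1, s.2) (Xf p.1, p.2))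
            + br (Xf s.1, s.2) (br (Xf p.1, p.2) (Xf q.1, q.2))).2 := by
              simp [Prod.snd_add]
        _ = 0 := by rw [h]; rfl
  · intro p q s
    refine Prod.ext ?_ ?_
    · simp only [Prod.fst_add, fst_PB, hmul]
      exact hPleibniz _ _ _
    · have hXmuleq : ((Xf (mul q s).1, (mul q s).2) : Derivation R A A × V)
          = q.1 • (Xf s.1, s.2) + s.1 • (Xf q.1, q.2) := by
        rw [hmul]
        simp [Prod.ext_iff, hXmul, add_comm]
      rw [snd_PB, hXmuleq, halg.add_right]
      have l1 := halg.leibniz q.1 (Xf p.1, p.2) (Xf s.1, s.2)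
      have l2 := halg.leibniz s.1 (Xf p.1, p.2) (Xf q.1, q.2)
      simp only [LinearMap.fst_apply] at l1 l2
      rw [l1, l2]
      rw [hmul, hmul]
      simp only [Prod.snd_add, Prod.smul_snd, fst_PB, snd_PB, hXf]
      abel
end

section
/- Let (A, {·,·}_A) be a Poisson algebra over R and let (F, [[·,·]], ρ) be a Lie algebroid over A with F a faithful A-module, V an A-module, ι : V → F an injective A-module map with range ι = ker ρ, ρ surjective, and γ : Der_R(A) → F an A-module map with ρ∘γ = id. Let [·,·]_V, ∇ and B be defined by ι([v₁,v₂]_V) = [[ι(v₁), ι(v₂)]], ι(∇_X(v)) = [[γ(X), ι(v)]] and ι(B(X,Y)) = [[γ(X), γ(Y)]] − γ([X,Y]), and set X_f := {f,·}_A. Then A ⊕ V, with the square-zero extension product (f₁,v₁)·(f₂,v₂) = (f₁f₂, f₁•v₂ + f₂•v₁) and the bracket {(f₁,v₁),(f₂,v₂)} = ({f₁,f₂}_A, ∇_{X_{f₁}}(v₂) − ∇_{X_{f₂}}(v₁) + [v₁,v₂]_V + B(X_{f₁}, X_{f₂})), is a Poisson algebra over R. -/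
/-- given a Poisson algebra `(A, P)` over `R` and a transitive Lie
algebroid `V →(ι) F →(ρ) Der_R(A)` on a faithful `A`-module `F` with an algebroid
connection `γ`, with `[·,·]_V`, `∇` and `B` induced via `ι`, the square-zero
extension `A ⊕ V` with the displayed product and bracket is a Poisson algebra
over `R`. -/
theorem poisson_on_square_zero_extension_of_transitive
    (R A : Type*) [CommRing R] [CommRing A] [Algebra R A]
    (F : Type*) [AddCommGroup F] [Module R F] [Module A F] [IsScalarTower R A F]
    (V : Type*) [AddCommGroup V] [Module R V] [Module A V] [IsScalarTower R A V]
    (P : A → A → A)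
    (hPadd_l : ∀ f g h : A, P (f + g) h = P f h + P g h)
    (hPadd_r : ∀ f g h : A, P f (g + h) = P f g + P f h)
    (hPsmul_l : ∀ (r : R) (f g : A), P (r • f) g = r • P f g)
    (hPsmul_r : ∀ (r : R) (f g : A), P f (r • g) = r • P f g)
    (hPskew : ∀ f g : A, P f g = - P g f)
    (hPjacobi : ∀ f g h : A, P f (P g h) + P g (P h f) + P h (P f g) = 0)
    (hPleibniz : ∀ f g h : A, P f (g * h) = P f g * h + g * P f h)
    (Xf : A → Derivation R A A) (hXf : ∀ f g : A, Xf f g = P f g)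
    (br : F → F → F) (ρ : F →ₗ[A] Derivation R A A)
    (halg : IsLieAlgebroid R A F br ρ)
    (hfaithful : ∀ f : A, (∀ X : F, f • X = 0) → f = 0)
    (ι : V →ₗ[A] F) (hinj : Function.Injective ι)
    (hrange : LinearMap.range ι = LinearMap.ker ρ)
    (hsurj : Function.Surjective ρ)
    (γ : Derivation R A A →ₗ[A] F) (hsec : ∀ X : Derivation R A A, ρ (γ X) = X)
    (brV : V → V → V)
    (hbrV : ∀ v₁ v₂ : V, ι (brV v₁ v₂) = br (ι v₁) (ι v₂))
    (nabla : Derivation R A A → V → V)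
    (hnabla : ∀ (X : Derivation R A A) (v : V), ι (nabla X v) = br (γ X) (ι v))
    (B : Derivation R A A → Derivation R A A → V)
    (hB : ∀ X Y : Derivation R A A, ι (B X Y) = br (γ X) (γ Y) - γ ⁅X, Y⁆)
    (mul : A × V → A × V → A × V)
    (hmul : ∀ p q : A × V, mul p q = (p.1 * q.1, p.1 • q.2 + q.1 • p.2))
    (PB : A × V → A × V → A × V)
    (hPB : ∀ p q : A × V,
      PB p q = (P p.1 q.1,
        nabla (Xf p.1) q.2 - nabla (Xf q.1) p.2 + brV p.2 q.2 + B (Xf p.1) (Xf q.1))) :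
    (∀ p q s : A × V, PB (p + q) s = PB p s + PB q s) ∧
    (∀ p q s : A × V, PB p (q + s) = PB p q + PB p s) ∧
    (∀ (r : R) (p q : A × V), PB (r • p) q = r • PB p q) ∧
    (∀ (r : R) (p q : A × V), PB p (r • q) = r • PB p q) ∧
    (∀ p q : A × V, PB p q = - PB q p) ∧
    (∀ p q s : A × V, PB p (PB q s) + PB q (PB s p) + PB s (PB p q) = 0) ∧
    (∀ p q s : A × V, PB p (mul q s) = mul (PB p q) s + mul q (PB p s)) := by
  obtain ⟨badd_l, badd_r, bsmul_l, bsmul_r, balt, bjac, blei⟩ := halg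
  have bskew : ∀ X Y : F, br X Y = - br Y X := by
    intro X Y
    have h := balt (X + Y)
    rw [badd_l, badd_r, badd_r, balt, balt] at h
    have h2 : br X Y + br Y X = 0 := by simpa using h
    exact eq_neg_of_add_eq_zero_left h2
  have Pzl : ∀ g : A, P 0 g = 0 := fun g => by
    have h := hPsmul_l 0 0 g; simpa using h
  have Pzr : ∀ f : A, P f 0 = 0 := fun f => by
    have h := hPsmul_r 0 f 0; simpa using h
  have Pnl : ∀ x y : A, P (-x) y = - P x y := fun x y => by
    have h := hPadd_l x (-x) y
    rw [add_neg_cancel, Pzl] at h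
    linear_combination h.symm
  have Pnr : ∀ x y : A, P x (-y) = - P x y := fun x y => by
    have h := hPadd_r x y (-y)
    rw [add_neg_cancel, Pzr] at h
    linear_combination h.symm
  have Xf_add : ∀ f g : A, Xf (f + g) = Xf f + Xf g := fun f g => by
    ext a; simp [hXf, hPadd_l]
  have Xf_smul : ∀ (r : R) (f : A), Xf (r • f) = r • Xf f := fun r f => by
    ext a; simp [hXf, hPsmul_l]
  have Xf_zero : Xf 0 = 0 := by
    ext a; simp [hXf, Pzl]
  have Xf_neg : ∀ f : A, Xf (-f) = - Xf f := fun f => by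
    ext a; simp [hXf, Pnl]
  have Xf_mul : ∀ f g : A, Xf (f * g) = g • Xf f + f • Xf g := fun f g => by
    ext a
    have key : P (f * g) a = g * P f a + f * P g a := by
      have h1 := hPskew (f * g) a
      have h2 := hPleibniz a f g
      have h3 := hPskew f a
      have h4 := hPskew g a
      rw [h1, h2, h3, h4]; ring
    simp [hXf, key, smul_eq_mul]
  have Xf_P : ∀ f g : A, Xf (P f g) = ⁅Xf f, Xf g⁆ := by
    intro f g
    ext a
    have hj := hPjacobi f g a
    have key : P (P f g) a = P f (P g a) - P g (P f a) := by
      have e1 : P g (P a f) = - P g (P f a) := by rw [hPskew a f, Pnr]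
      have e2 : P a (P f g) = - P (P f g) a := hPskew a (P f g)
      rw [e1, e2] at hj
      linear_combination -hj
    simp [hXf, Derivation.commutator_apply, key]
  have ριz : ∀ v : V, ρ (ι v) = 0 := fun v => by
    have h : ι v ∈ LinearMap.ker ρ := by
      rw [← hrange]; exact LinearMap.mem_range_self ι v
    simpa using h
  have h1 : ∀ a b : A × V, (PB a b).1 = P a.1 b.1 := fun a b => by rw [hPB]
  have hσPB : ∀ p q : A × V,
      γ (Xf (P p.1 q.1)) + ι ((PB p q).2)
        = br (γ (Xf p.1) + ι p.2) (γ (Xf q.1) + ι q.2) := by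
    intro p q
    rw [hPB]
    simp only [map_add, map_sub, hnabla, hbrV, hB, Xf_P]
    rw [badd_l, badd_r, badd_r, bskew (ι p.2) (γ (Xf q.1))]
    abel
  have hι2 : ∀ p q : A × V,
      ι ((PB p q).2)
        = br (γ (Xf p.1) + ι p.2) (γ (Xf q.1) + ι q.2) - γ (Xf (P p.1 q.1)) :=
    fun p q => eq_sub_of_add_eq' (hσPB p q)
  have E_add : ∀ (f g : A) (v w : V),
      γ (Xf (f + g)) + ι (v + w) = (γ (Xf f) + ι v) + (γ (Xf g) + ι w) := by
    intro f g v w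
    rw [Xf_add, map_add, map_add]; abel
  have E_smul : ∀ (r : R) (f : A) (v : V),
      γ (Xf (r • f)) + ι (r • v) = r • (γ (Xf f) + ι v) := by
    intro r f v
    rw [Xf_smul, γ.map_smul_of_tower, ι.map_smul_of_tower, smul_add]
  have E_mul : ∀ (f g : A) (v w : V),
      γ (Xf (f * g)) + ι (f • w + g • v)
        = f • (γ (Xf g) + ι w) + g • (γ (Xf f) + ι v) := by
    intro f g v w
    rw [Xf_mul, map_add, map_smul, map_smul, map_add, map_smul, map_smul,
      smul_add, smul_add]
    abel
  refine ⟨?_, ?_, ?_, ?_, ?_, ?_, ?_⟩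
  · -- additivity left
    intro p q s
    refine Prod.ext ?_ ?_
    · simp only [hPB, Prod.fst_add]
      exact hPadd_l p.1 q.1 s.1
    · apply hinj
      rw [Prod.snd_add, map_add, hι2, hι2, hι2, Prod.fst_add, Prod.snd_add,
        E_add p.1 q.1 p.2 q.2, badd_l, hPadd_l, Xf_add, map_add]
      abel
  · -- additivity right
    intro p q s
    refine Prod.ext ?_ ?_
    · simp only [hPB, Prod.fst_add]
      exact hPadd_r p.1 q.1 s.1
    · apply hinj
      rw [Prod.snd_add, map_add, hι2, hι2, hι2, Prod.fst_add, Prod.snd_add,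
        E_add q.1 s.1 q.2 s.2, badd_r, hPadd_r, Xf_add, map_add]
      abel
  · -- R-linearity left
    intro r p q
    refine Prod.ext ?_ ?_
    · simp only [hPB, Prod.smul_fst]
      exact hPsmul_l r p.1 q.1
    · apply hinj
      rw [Prod.smul_snd, ι.map_smul_of_tower, hι2, hι2, Prod.smul_fst, Prod.smul_snd,
        E_smul r p.1 p.2, bsmul_l, hPsmul_l, Xf_smul, γ.map_smul_of_tower, smul_sub]
  · -- R-linearity right
    intro r p q
    refine Prod.ext ?_ ?_
    · simp only [hPB, Prod.smul_fst]
      exact hPsmul_r r p.1 q.1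
    · apply hinj
      rw [Prod.smul_snd, ι.map_smul_of_tower, hι2, hι2, Prod.smul_fst, Prod.smul_snd,
        E_smul r q.1 q.2, bsmul_r, hPsmul_r, Xf_smul, γ.map_smul_of_tower, smul_sub]
  · -- skew-symmetry
    intro p q
    refine Prod.ext ?_ ?_
    · simp only [hPB, Prod.fst_neg]
      exact hPskew p.1 q.1
    · apply hinj
      rw [Prod.snd_neg, map_neg, hι2, hι2, bskew, hPskew p.1 q.1, Xf_neg, map_neg]
      abel
  · -- Jacobi identity
    intro p q s
    have key : ∀ a b c : A × V,
        ι ((PB a (PB b c)).2)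
          = br (γ (Xf a.1) + ι a.2)
              (br (γ (Xf b.1) + ι b.2) (γ (Xf c.1) + ι c.2))
            - γ (Xf (P a.1 (P b.1 c.1))) := by
      intro a b c
      rw [hι2, h1, hσPB]
    refine Prod.ext ?_ ?_
    · simp only [Prod.fst_add, h1, Prod.fst_zero]
      exact hPjacobi p.1 q.1 s.1
    · apply hinj
      rw [Prod.snd_add, Prod.snd_add, map_add, map_add, key p q s, key q s p,
        key s p q, Prod.snd_zero, map_zero]
      have hb := bjac (γ (Xf p.1) + ι p.2) (γ (Xf q.1) + ι q.2) (γ (Xf s.1) + ι s.2)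
      have hg : γ (Xf (P p.1 (P q.1 s.1))) + γ (Xf (P q.1 (P s.1 p.1)))
          + γ (Xf (P s.1 (P p.1 q.1))) = 0 := by
        rw [← map_add, ← map_add, ← Xf_add, ← Xf_add, hPjacobi, Xf_zero, map_zero]
      calc br (γ (Xf p.1) + ι p.2) (br (γ (Xf q.1) + ι q.2) (γ (Xf s.1) + ι s.2))
            - γ (Xf (P p.1 (P q.1 s.1)))
          + (br (γ (Xf q.1) + ι q.2) (br (γ (Xf s.1) + ι s.2) (γ (Xf p.1) + ι p.2))
            - γ (Xf (P q.1 (P s.1 p.1))))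
          + (br (γ (Xf s.1) + ι s.2) (br (γ (Xf p.1) + ι p.2) (γ (Xf q.1) + ι q.2))
            - γ (Xf (P s.1 (P p.1 q.1))))
          = (br (γ (Xf p.1) + ι p.2) (br (γ (Xf q.1) + ι q.2) (γ (Xf s.1) + ι s.2))
            + br (γ (Xf q.1) + ι q.2) (br (γ (Xf s.1) + ι s.2) (γ (Xf p.1) + ι p.2))
            + br (γ (Xf s.1) + ι s.2) (br (γ (Xf p.1) + ι p.2) (γ (Xf q.1) + ι q.2)))
            - (γ (Xf (P p.1 (P q.1 s.1))) + γ (Xf (P q.1 (P s.1 p.1)))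
              + γ (Xf (P s.1 (P p.1 q.1)))) := by abel
        _ = 0 := by rw [hb, hg, sub_zero]
  · -- Leibniz rule
    intro p q s
    have hm1 : (mul q s).1 = q.1 * s.1 := by rw [hmul]
    have hm2 : (mul q s).2 = q.1 • s.2 + s.1 • q.2 := by rw [hmul]
    refine Prod.ext ?_ ?_
    · simp only [hPB, hmul, Prod.fst_add]
      exact hPleibniz p.1 q.1 s.1
    · apply hinj
      have ρS : ρ (γ (Xf p.1) + ι p.2) = Xf p.1 := by
        rw [map_add, hsec, ριz, add_zero]
      have hXmul : γ (Xf (P p.1 (q.1 * s.1)))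
          = P p.1 q.1 • γ (Xf s.1) + P p.1 s.1 • γ (Xf q.1)
            + q.1 • γ (Xf (P p.1 s.1)) + s.1 • γ (Xf (P p.1 q.1)) := by
        rw [hPleibniz, Xf_add, Xf_mul, Xf_mul]
        simp only [map_add, map_smul]
        abel
      have lhs_eq : ι ((PB p (mul q s)).2)
          = q.1 • br (γ (Xf p.1) + ι p.2) (γ (Xf s.1) + ι s.2)
            + s.1 • br (γ (Xf p.1) + ι p.2) (γ (Xf q.1) + ι q.2)
            + P p.1 q.1 • ι s.2 + P p.1 s.1 • ι q.2
            - q.1 • γ (Xf (P p.1 s.1)) - s.1 • γ (Xf (P p.1 q.1)) := by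
        rw [hι2, hm1, hm2, E_mul q.1 s.1 q.2 s.2, badd_r, blei, blei, ρS,
          hXf p.1 q.1, hXf p.1 s.1, hXmul, smul_add (P p.1 q.1), smul_add (P p.1 s.1)]
        abel
      have rhs_eq : ι ((mul (PB p q) s + mul q (PB p s)).2)
          = q.1 • br (γ (Xf p.1) + ι p.2) (γ (Xf s.1) + ι s.2)
            + s.1 • br (γ (Xf p.1) + ι p.2) (γ (Xf q.1) + ι q.2)
            + P p.1 q.1 • ι s.2 + P p.1 s.1 • ι q.2
            - q.1 • γ (Xf (P p.1 s.1)) - s.1 • γ (Xf (P p.1 q.1)) := by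
        simp only [Prod.snd_add, map_add, hmul, h1, hι2, map_smul, smul_sub]
        abel
      rw [lhs_eq, rhs_eq]
end

section
/- Let A' = A[θ] be the algebra of dual numbers over A (elements x + yθ with x, y ∈ A and θ² = 0), regarded as a module over itself. Then the bracket [[x₁ + y₁θ, x₂ + y₂θ]] = (x₁y₂ − y₁x₂)θ is an R-bilinear Lie bracket on A', for each x + yθ ∈ A' the adjoint map ad_x : A' → A', ad_x(z) = [[x + yθ, z]] (which depends only on x) is an R-linear derivation of A', and the map ρ : A' → Der_R(A'), ρ(x + yθ) = ad_x, is A'-linear and satisfies the Leibniz rule [[u, f·w]] = f·[[u,w]] + ρ(u)(f)·w for all f, u, w ∈ A'; hence (A', [[·,·]], ρ) is a Lie algebroid on the faithful A'-module A' over A'. -/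
section Aux
variable (R A : Type*) [CommRing R] [CommRing A] [Algebra R A]

@[simp] lemma dn_mul_inr (f : DualNumber A) (a : A) :
    f * TrivSqZeroExt.inr a = TrivSqZeroExt.inr (f.fst * a) := by
  ext <;> simp [TrivSqZeroExt.snd_mul, mul_comm]

def dnAd (p : DualNumber A) : Derivation R (DualNumber A) (DualNumber A) where
  toFun z := TrivSqZeroExt.inr (p.fst * z.snd)
  map_add' z w := by ext <;> simp [mul_add]
  map_smul' r z := by ext <;> simp [mul_smul_comm]
  map_one_eq_zero' := by ext <;> simp
  leibniz' z w := by
    ext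
    · simp
    · simp [TrivSqZeroExt.snd_mul, smul_eq_mul]
      ring

@[simp] lemma dnAd_apply (p z : DualNumber A) :
    dnAd R A p z = TrivSqZeroExt.inr (p.fst * z.snd) := rfl

def dnAnchor : DualNumber A →ₗ[DualNumber A]
    Derivation R (DualNumber A) (DualNumber A) where
  toFun := dnAd R A
  map_add' p q := by ext z <;> simp [add_mul]
  map_smul' f p := by
    ext z
    · simp [TrivSqZeroExt.fst_mul]
    · simp [TrivSqZeroExt.fst_mul, TrivSqZeroExt.snd_mul, smul_eq_mul]
      ring

end Aux

/-- on the dual numbers `A' = A[θ]` (as a module over itself), the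
bracket `[[x₁+y₁θ, x₂+y₂θ]] = (x₁y₂ - y₁x₂)θ` is an `R`-bilinear Lie bracket, and
there is an `A'`-linear anchor `ρ : A' → Der_R(A')` with `ρ(x+yθ) = ad_x`, where
`ad_x z = [[x, z]]` is the adjoint map of the scalar part `x` (so that it depends
only on `x`), making `(A', [[·,·]], ρ)` a Lie algebroid on the faithful
`A'`-module `A'` over `A'`. -/
theorem dual_numbers_lie_algebroid
    (R A : Type*) [CommRing R] [CommRing A] [Algebra R A] :
    ∃ ρ : DualNumber A →ₗ[DualNumber A]
        Derivation R (DualNumber A) (DualNumber A),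
      (∀ p z : DualNumber A,
        ρ p z = (fun u w : DualNumber A =>
          (TrivSqZeroExt.inr (u.fst * w.snd - u.snd * w.fst) : DualNumber A))
          (TrivSqZeroExt.inl p.fst) z) ∧
      IsLieAlgebroid R (DualNumber A) (DualNumber A)
        (fun u w => TrivSqZeroExt.inr (u.fst * w.snd - u.snd * w.fst)) ρ ∧
      (∀ f : DualNumber A, (∀ w : DualNumber A, f • w = 0) → f = 0) := by
  refine ⟨dnAnchor R A, ?_, ?_, ?_⟩
  · intro p z
    simp [dnAnchor]
  · constructor
    · intro X Y Z; ext <;> simp <;> ring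
    · intro X Y Z; ext <;> simp <;> ring
    · intro r X Y; ext <;> simp [smul_sub, mul_smul_comm, smul_mul_assoc] <;> ring
    · intro r X Y; ext <;> simp [smul_sub, mul_smul_comm, smul_mul_assoc] <;> ring
    · intro X; ext <;> simp [mul_comm]
    · intro X Y Z; ext <;> simp <;> ring
    · intro f X Y
      ext
      · simp [dnAnchor, TrivSqZeroExt.fst_mul]
      · simp [dnAnchor, TrivSqZeroExt.snd_mul, smul_eq_mul]
        ring
  · intro f hf
    have := hf 1
    simpa using this
end
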